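/- arXiv:2006.01083 — 5 statements merged into one kernel-verified Lean document; each statement's English description precedes it below -/
import Mathlib

section
/- Let (X₁, F₁, μ₁), (X₂, F₂, μ₂), (Y₁, G₁, ν₁), (Y₂, G₂, ν₂) be σ-finite measure spaces, X := X₁ × X₂ with μ := μ₁ ⊗ μ₂, Y := Y₁ × Y₂ with ν := ν₁ ⊗ ν₂, and let m : X × Y → (0,∞) be measurable. Then every measurable K : X × Y → ℂ satisfies ‖K‖_{𝒜_m(X,Y)} ≤ ‖K‖_{𝓑_m(X,Y)}, where ‖K‖_{𝒜_m} := ‖m·K‖_{𝒜(X,Y)}; in particular, every K ∈ 𝓑_m(X,Y) satisfies ‖m·K‖_{𝒜(X,Y)} < ∞. -/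
open MeasureTheory ENNReal Filter

noncomputable section

/-- `L^p` norm (in `[0,∞]`) of an `ℝ≥0∞`-valued function. -/
def lpNormENN {α : Type*} [MeasurableSpace α] (μ : Measure α) (p : ℝ≥0∞)
    (f : α → ℝ≥0∞) : ℝ≥0∞ :=
  if p = ∞ then essSup f μ else (∫⁻ a, f a ^ p.toReal ∂μ) ^ (1 / p.toReal)

/-- Mixed `L^{p,q}` norm of an `ℝ≥0∞`-valued function on a product space. -/
def mixedNormENN {α β : Type*} [MeasurableSpace α] [MeasurableSpace β]
    (μ₁ : Measure α) (μ₂ : Measure β) (p q : ℝ≥0∞) (f : α × β → ℝ≥0∞) : ℝ≥0∞ :=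
  lpNormENN μ₂ q fun x₂ => lpNormENN μ₁ p fun x₁ => f (x₁, x₂)

/-- Mixed `L^{p,q}` norm of a complex-valued function on a product space. -/
def mixedNorm {α β : Type*} [MeasurableSpace α] [MeasurableSpace β]
    (μ₁ : Measure α) (μ₂ : Measure β) (p q : ℝ≥0∞) (f : α × β → ℂ) : ℝ≥0∞ :=
  mixedNormENN μ₁ μ₂ p q fun x => (‖f x‖₊ : ℝ≥0∞)

/-- The Schur constant `C₁(K)`. -/
def schurC1 {X Y : Type*} [MeasurableSpace X] [MeasurableSpace Y]
    (μ : Measure X) (ν : Measure Y) (K : X × Y → ℝ≥0∞) : ℝ≥0∞ :=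
  essSup (fun x => ∫⁻ y, K (x, y) ∂ν) μ

/-- The Schur constant `C₂(K)`. -/
def schurC2 {X Y : Type*} [MeasurableSpace X] [MeasurableSpace Y]
    (μ : Measure X) (ν : Measure Y) (K : X × Y → ℝ≥0∞) : ℝ≥0∞ :=
  essSup (fun y => ∫⁻ x, K (x, y) ∂μ) ν

/-- The Schur constant `C₃(K)`. -/
def schurC3 {X₁ X₂ Y₁ Y₂ : Type*} [MeasurableSpace X₁] [MeasurableSpace X₂]
    [MeasurableSpace Y₁] [MeasurableSpace Y₂]
    (μ₁ : Measure X₁) (μ₂ : Measure X₂) (ν₁ : Measure Y₁) (ν₂ : Measure Y₂)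
    (K : (X₁ × X₂) × (Y₁ × Y₂) → ℝ≥0∞) : ℝ≥0∞ :=
  essSup (fun x₂ =>
    ∫⁻ y₂, essSup (fun y₁ => ∫⁻ x₁, K ((x₁, x₂), (y₁, y₂)) ∂μ₁) ν₁ ∂ν₂) μ₂

/-- The Schur constant `C₄(K)`. -/
def schurC4 {X₁ X₂ Y₁ Y₂ : Type*} [MeasurableSpace X₁] [MeasurableSpace X₂]
    [MeasurableSpace Y₁] [MeasurableSpace Y₂]
    (μ₁ : Measure X₁) (μ₂ : Measure X₂) (ν₁ : Measure Y₁) (ν₂ : Measure Y₂)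
    (K : (X₁ × X₂) × (Y₁ × Y₂) → ℝ≥0∞) : ℝ≥0∞ :=
  essSup (fun y₂ =>
    ∫⁻ x₂, essSup (fun x₁ => ∫⁻ y₁, K ((x₁, x₂), (y₁, y₂)) ∂ν₁) μ₁ ∂μ₂) ν₂

/-- The kernel norm `‖K‖_{𝒜(U,V)}`. -/
def normA {U V : Type*} [MeasurableSpace U] [MeasurableSpace V]
    (lam : Measure U) (kap : Measure V) (K : U × V → ℝ≥0∞) : ℝ≥0∞ :=
  max (essSup (fun u => ∫⁻ v, K (u, v) ∂kap) lam)
      (essSup (fun v => ∫⁻ u, K (u, v) ∂lam) kap)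

/-- The kernel norm `‖K‖_{𝓑(X,Y)}` for an `ℝ≥0∞`-valued kernel. -/
def normB {X₁ X₂ Y₁ Y₂ : Type*} [MeasurableSpace X₁] [MeasurableSpace X₂]
    [MeasurableSpace Y₁] [MeasurableSpace Y₂]
    (μ₁ : Measure X₁) (μ₂ : Measure X₂) (ν₁ : Measure Y₁) (ν₂ : Measure Y₂)
    (K : (X₁ × X₂) × (Y₁ × Y₂) → ℝ≥0∞) : ℝ≥0∞ :=
  normA μ₂ ν₂ fun s => normA μ₁ ν₁ fun t => K ((t.1, s.1), (t.2, s.2))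

/-- The weighted kernel norm `‖K‖_{𝓑_m(X,Y)}` for an `ℝ≥0∞`-valued kernel. -/
def normBmENN {X₁ X₂ Y₁ Y₂ : Type*} [MeasurableSpace X₁] [MeasurableSpace X₂]
    [MeasurableSpace Y₁] [MeasurableSpace Y₂]
    (μ₁ : Measure X₁) (μ₂ : Measure X₂) (ν₁ : Measure Y₁) (ν₂ : Measure Y₂)
    (m : (X₁ × X₂) × (Y₁ × Y₂) → ℝ) (K : (X₁ × X₂) × (Y₁ × Y₂) → ℝ≥0∞) : ℝ≥0∞ :=
  normB μ₁ μ₂ ν₁ ν₂ fun z => ENNReal.ofReal (m z) * K z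

/-- The weighted kernel norm `‖K‖_{𝓑_m(X,Y)}` for a complex-valued kernel. -/
def normBm {X₁ X₂ Y₁ Y₂ : Type*} [MeasurableSpace X₁] [MeasurableSpace X₂]
    [MeasurableSpace Y₁] [MeasurableSpace Y₂]
    (μ₁ : Measure X₁) (μ₂ : Measure X₂) (ν₁ : Measure Y₁) (ν₂ : Measure Y₂)
    (m : (X₁ × X₂) × (Y₁ × Y₂) → ℝ) (K : (X₁ × X₂) × (Y₁ × Y₂) → ℂ) : ℝ≥0∞ :=
  normBmENN μ₁ μ₂ ν₁ ν₂ m fun z => (‖K z‖₊ : ℝ≥0∞)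

/-- The norm of the space `𝒢 = L¹ ∩ L^∞ ∩ L^{1,∞} ∩ L^{∞,1}`. -/
def Gnorm {α β : Type*} [MeasurableSpace α] [MeasurableSpace β]
    (μ₁ : Measure α) (μ₂ : Measure β) (f : α × β → ℂ) : ℝ≥0∞ :=
  max (max (eLpNorm f 1 (μ₁.prod μ₂)) (eLpNorm f ∞ (μ₁.prod μ₂)))
      (max (mixedNorm μ₁ μ₂ 1 ∞ f) (mixedNorm μ₁ μ₂ ∞ 1 f))

/-- The norm of the sum space `𝓗 = L¹ + L^∞ + L^{1,∞} + L^{∞,1}`. -/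
def Hnorm {α β : Type*} [MeasurableSpace α] [MeasurableSpace β]
    (μ₁ : Measure α) (μ₂ : Measure β) (f : α × β → ℂ) : ℝ≥0∞ :=
  ⨅ (g : (α × β → ℂ) × (α × β → ℂ) × (α × β → ℂ) × (α × β → ℂ))
    (_ : Measurable g.1 ∧ Measurable g.2.1 ∧ Measurable g.2.2.1 ∧ Measurable g.2.2.2 ∧
      f = g.1 + g.2.1 + g.2.2.1 + g.2.2.2),
    eLpNorm g.1 1 (μ₁.prod μ₂) + eLpNorm g.2.1 ∞ (μ₁.prod μ₂) +
      mixedNorm μ₁ μ₂ 1 ∞ g.2.2.1 + mixedNorm μ₁ μ₂ ∞ 1 g.2.2.2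

/-- The functional `ρ(f) = inf { ‖g‖_∞ + ‖h‖_1 : f = g + h }`. -/
def rho {α : Type*} [MeasurableSpace α] (μ : Measure α) (f : α → ℝ≥0∞) : ℝ≥0∞ :=
  ⨅ (gh : (α → ℝ≥0∞) × (α → ℝ≥0∞))
    (_ : Measurable gh.1 ∧ Measurable gh.2 ∧ f = gh.1 + gh.2),
    essSup gh.1 μ + ∫⁻ x, gh.2 x ∂μ

/-! The first half of `‖K‖_𝒜` is `ess sup_{(x₁,x₂)} ∫∫ K dν₁ dν₂`. An essential supremum over a
product measure is bounded by the iterated essential supremum, and for fixed `x₂` the essential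
supremum over `x₁` may be moved inside the `y₂`-integral, since an essential supremum of integrals
is at most the integral of the essential suprema. What remains,
`ess sup_{x₂} ∫ ess sup_{x₁} ∫ K dν₁ dν₂`, is dominated by the first half of `‖K‖_𝓑`; the second
half is the same argument with the roles of `X` and `Y` exchanged. -/

theorem essSup_prod_le_essSup_essSup {α β : Type*} [MeasurableSpace α] [MeasurableSpace β]
    {μ : Measure α} {ν : Measure β} [SFinite μ] [SFinite ν]
    {h : α × β → ℝ≥0∞} (hh : Measurable h) :
    essSup h (μ.prod ν) ≤ essSup (fun b => essSup (fun a => h (a, b)) μ) ν := by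
  set C := essSup (fun b => essSup (fun a => h (a, b)) μ) ν
  have hS := measurableSet_le hh (measurable_const (a := C))
  refine essSup_le_of_ae_le _ <| (Measure.ae_prod_iff_ae_ae hS).2 <| (Measure.ae_ae_comm hS).2 ?_
  filter_upwards [ENNReal.ae_le_essSup fun b => essSup (fun a => h (a, b)) μ] with b hb
  filter_upwards [ENNReal.ae_le_essSup fun a => h (a, b)] with a ha
  exact ha.trans hb

/- Testing against sets of finite `μ`-measure avoids needing `b ↦ essSup (fun a => F (a, b)) μ`
to be measurable. -/
theorem essSup_lintegral_le_lintegral_essSup {α β : Type*} [MeasurableSpace α]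
    [MeasurableSpace β] {μ : Measure α} {ν : Measure β} [SigmaFinite μ] [SFinite ν]
    {F : α × β → ℝ≥0∞} (hF : Measurable F) :
    essSup (fun a => ∫⁻ b, F (a, b) ∂ν) μ ≤ ∫⁻ b, essSup (fun a => F (a, b)) μ ∂ν := by
  refine essSup_le_of_ae_le _ <|
    ae_le_of_forall_setLIntegral_le_of_sigmaFinite hF.lintegral_prod_right' fun s _ hs => ?_
  calc ∫⁻ a in s, ∫⁻ b, F (a, b) ∂ν ∂μ
      = ∫⁻ b, ∫⁻ a in s, F (a, b) ∂μ ∂ν := lintegral_lintegral_swap hF.aemeasurable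
    _ ≤ ∫⁻ b, essSup (fun a => F (a, b)) μ * μ s ∂ν := by
        refine lintegral_mono fun b => ?_
        rw [← setLIntegral_const]
        exact lintegral_mono_ae (ae_restrict_of_ae (ENNReal.ae_le_essSup _))
    _ = ∫⁻ _ in s, ∫⁻ b, essSup (fun a => F (a, b)) μ ∂ν ∂μ := by
        rw [lintegral_mul_const' _ _ hs.ne, setLIntegral_const]

theorem essSup_lintegral_prod_le {α β γ δ : Type*} [MeasurableSpace α] [MeasurableSpace β]
    [MeasurableSpace γ] [MeasurableSpace δ]
    {μ₁ : Measure α} {μ₂ : Measure β} {ν₁ : Measure γ} {ν₂ : Measure δ}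
    [SigmaFinite μ₁] [SFinite μ₂] [SFinite ν₁] [SFinite ν₂]
    {f : (α × β) × (γ × δ) → ℝ≥0∞} (hf : Measurable f) :
    essSup (fun x => ∫⁻ y, f (x, y) ∂(ν₁.prod ν₂)) (μ₁.prod μ₂) ≤
      essSup (fun b => ∫⁻ d, essSup (fun a => ∫⁻ c, f ((a, b), (c, d)) ∂ν₁) μ₁ ∂ν₂) μ₂ := by
  refine (essSup_prod_le_essSup_essSup hf.lintegral_prod_right').trans <|
    essSup_mono_ae <| .of_forall fun b => ?_
  have h_iter : ∀ a, ∫⁻ y, f ((a, b), y) ∂(ν₁.prod ν₂) =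
      ∫⁻ d, ∫⁻ c, f ((a, b), (c, d)) ∂ν₁ ∂ν₂ := fun a =>
    lintegral_prod_symm' (fun y => f ((a, b), y)) (hf.comp (by fun_prop))
  have hfb : Measurable fun q : (α × δ) × γ => f ((q.1.1, b), (q.2, q.1.2)) :=
    hf.comp (by fun_prop)
  simp only [h_iter]
  exact essSup_lintegral_le_lintegral_essSup
    (F := fun p => ∫⁻ c, f ((p.1, b), (c, p.2)) ∂ν₁) hfb.lintegral_prod_right'

theorem normA_prod_le_normB {X₁ X₂ Y₁ Y₂ : Type*} [MeasurableSpace X₁] [MeasurableSpace X₂]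
    [MeasurableSpace Y₁] [MeasurableSpace Y₂]
    (μ₁ : Measure X₁) (μ₂ : Measure X₂) (ν₁ : Measure Y₁) (ν₂ : Measure Y₂)
    [SigmaFinite μ₁] [SFinite μ₂] [SigmaFinite ν₁] [SFinite ν₂]
    {K : (X₁ × X₂) × (Y₁ × Y₂) → ℝ≥0∞} (hK : Measurable K) :
    normA (μ₁.prod μ₂) (ν₁.prod ν₂) K ≤ normB μ₁ μ₂ ν₁ ν₂ K := by
  refine max_le ?_ ?_
  · refine (essSup_lintegral_prod_le hK).trans <| le_max_of_le_left <|
      essSup_mono_ae <| .of_forall fun x₂ => lintegral_mono fun y₂ => ?_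
    exact le_max_left _ _
  · refine (essSup_lintegral_prod_le (hK.comp measurable_swap)).trans <| le_max_of_le_right <|
      essSup_mono_ae <| .of_forall fun y₂ => lintegral_mono fun x₂ => ?_
    exact le_max_right _ _

theorem Am_le_Bm_general
    {X₁ X₂ Y₁ Y₂ : Type*} [MeasurableSpace X₁] [MeasurableSpace X₂]
    [MeasurableSpace Y₁] [MeasurableSpace Y₂]
    (μ₁ : Measure X₁) (μ₂ : Measure X₂) (ν₁ : Measure Y₁) (ν₂ : Measure Y₂)
    [SigmaFinite μ₁] [SigmaFinite μ₂] [SigmaFinite ν₁] [SigmaFinite ν₂]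
    (m : (X₁ × X₂) × (Y₁ × Y₂) → ℝ) (hm : Measurable m)
    (K : (X₁ × X₂) × (Y₁ × Y₂) → ℂ) (hK : Measurable K) :
    normA (μ₁.prod μ₂) (ν₁.prod ν₂)
        (fun z => ENNReal.ofReal (m z) * (‖K z‖₊ : ℝ≥0∞)) ≤
      normBm μ₁ μ₂ ν₁ ν₂ m K ∧
    (normBm μ₁ μ₂ ν₁ ν₂ m K < ∞ →
      normA (μ₁.prod μ₂) (ν₁.prod ν₂)
        (fun z => ENNReal.ofReal (m z) * (‖K z‖₊ : ℝ≥0∞)) < ∞) := by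
  have hL : Measurable fun z => ENNReal.ofReal (m z) * (‖K z‖₊ : ℝ≥0∞) :=
    hm.ennreal_ofReal.mul hK.nnnorm.coe_nnreal_ennreal
  have hA : normA (μ₁.prod μ₂) (ν₁.prod ν₂)
      (fun z => ENNReal.ofReal (m z) * (‖K z‖₊ : ℝ≥0∞)) ≤ normBm μ₁ μ₂ ν₁ ν₂ m K :=
    normA_prod_le_normB μ₁ μ₂ ν₁ ν₂ hL
  exact ⟨hA, hA.trans_lt⟩

/-- `‖K‖_{𝒜_m} ≤ ‖K‖_{𝓑_m}` (Proposition `prop:NewKernelModuleBasicProperties1` (4)). -/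
theorem Am_le_Bm
    {X₁ X₂ Y₁ Y₂ : Type*} [MeasurableSpace X₁] [MeasurableSpace X₂]
    [MeasurableSpace Y₁] [MeasurableSpace Y₂]
    (μ₁ : Measure X₁) (μ₂ : Measure X₂) (ν₁ : Measure Y₁) (ν₂ : Measure Y₂)
    [SigmaFinite μ₁] [SigmaFinite μ₂] [SigmaFinite ν₁] [SigmaFinite ν₂]
    (m : (X₁ × X₂) × (Y₁ × Y₂) → ℝ) (hm : Measurable m) (hm_pos : ∀ z, 0 < m z)
    (K : (X₁ × X₂) × (Y₁ × Y₂) → ℂ) (hK : Measurable K) :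
    normA (μ₁.prod μ₂) (ν₁.prod ν₂)
        (fun z => ENNReal.ofReal (m z) * (‖K z‖₊ : ℝ≥0∞)) ≤
      normBm μ₁ μ₂ ν₁ ν₂ m K ∧
    (normBm μ₁ μ₂ ν₁ ν₂ m K < ∞ →
      normA (μ₁.prod μ₂) (ν₁.prod ν₂)
        (fun z => ENNReal.ofReal (m z) * (‖K z‖₊ : ℝ≥0∞)) < ∞) :=
  Am_le_Bm_general μ₁ μ₂ ν₁ ν₂ m hm K hK

end
end

section
/- Let (X₁, F₁, μ₁), (X₂, F₂, μ₂), (Y₁, G₁, ν₁), (Y₂, G₂, ν₂), (Z₁, H₁, ϱ₁), (Z₂, H₂, ϱ₂) be σ-finite measure spaces, X := X₁ × X₂ with μ := μ₁ ⊗ μ₂, Y := Y₁ × Y₂ with ν := ν₁ ⊗ ν₂, Z := Z₁ × Z₂ with ϱ := ϱ₁ ⊗ ϱ₂. Let ω : X × Y → (0,∞), σ : Y × Z → (0,∞), τ : X × Z → (0,∞) be measurable with τ(x,z) ≤ C · ω(x,y) · σ(y,z) for all x ∈ X, y ∈ Y, z ∈ Z and some constant C > 0. If K ∈ 𝓑_ω(X,Y)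 and L ∈ 𝓑_σ(Y,Z), then the product kernel (K ⊙ L)(x,z) := ∫_Y K(x,y) L(y,z) dν(y) is defined by an absolutely convergent integral for (μ ⊗ ϱ)-almost all (x,z), K ⊙ L ∈ 𝓑_τ(X,Z), and ‖K ⊙ L‖_{𝓑_τ} ≤ C · ‖K‖_{𝓑_ω} · ‖L‖_{𝓑_σ}. -/
open MeasureTheory ENNReal Filter

noncomputable section

/-! Schur's test bounds the `𝒜`-norm of a composition of nonnegative kernels by the product of
their `𝒜`-norms. For the iterated norm `𝓑` it is applied twice: for fixed outer variables, Tonelli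
writes the inner slice of `A ⊙ B` as an integral over `y₂` of compositions of inner slices, so
Minkowski's inequality (an essential supremum of integrals is at most the integral of the essential
suprema) and the inner Schur test bound it by the composition of the inner-norm kernels, to which
the outer Schur test applies. The weight condition `τ(x,z) ≤ C ω(x,y) σ(y,z)` dominates
`τ |K ⊙ L|` pointwise by `C` times the composition of `ω |K|` and `σ |L|`; this composition has
finite `𝓑`-norm, hence is finite almost everywhere, which gives the absolute convergence. -/

/-- The kernel product `A ⊙ B` of the paper. -/
def kernelMul {α β γ : Type*} [MeasurableSpace β] (ν : Measure β) (A : α × β → ℝ≥0∞)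
    (B : β × γ → ℝ≥0∞) (p : α × γ) : ℝ≥0∞ :=
  ∫⁻ y, A (p.1, y) * B (y, p.2) ∂ν

section Schur

variable {α β γ δ : Type*} [MeasurableSpace α] [MeasurableSpace β] [MeasurableSpace γ]
  [MeasurableSpace δ] {μ : Measure α} {ν : Measure β} {ρ : Measure γ}

lemma essSup_le_iff_ae_le {g : α → ℝ≥0∞} {c : ℝ≥0∞} : essSup g μ ≤ c ↔ ∀ᵐ x ∂μ, g x ≤ c :=
  ⟨fun h => (ENNReal.ae_le_essSup g).mono fun _ hx => hx.trans h, essSup_le_of_ae_le c⟩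

theorem Measurable.essSup_prod_left [SFinite μ] {f : α × β → ℝ≥0∞} (hf : Measurable f) :
    Measurable fun y => essSup (fun x => f (x, y)) μ := by
  refine measurable_of_Ioi fun c => ?_
  have hslice : Measurable fun y => μ ((fun x => (x, y)) ⁻¹' {p | f p ≤ c}ᶜ) :=
    measurable_measure_prodMk_right (measurableSet_le hf measurable_const).compl
  convert (hslice (measurableSet_singleton 0)).compl using 1
  ext y
  simp [← not_le, essSup_le_iff_ae_le, ae_iff, Set.compl_ofPred]

lemma essSup_lintegral_le_lintegral_essSup_s7 [SFinite μ] [SFinite ν] {f : α × β → ℝ≥0∞}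
    (hf : Measurable f) :
    essSup (fun x => ∫⁻ y, f (x, y) ∂ν) μ ≤ ∫⁻ y, essSup (fun x => f (x, y)) μ ∂ν := by
  have hle : ∀ᵐ x ∂μ, ∀ᵐ y ∂ν, f (x, y) ≤ essSup (fun x => f (x, y)) μ := by
    refine (Measure.ae_ae_comm ?_).2 (ae_of_all _ fun y => ENNReal.ae_le_essSup _)
    exact measurableSet_le hf (hf.essSup_prod_left.comp measurable_snd)
  exact essSup_le_of_ae_le _ (hle.mono fun x hx => lintegral_mono_ae hx)

lemma measurable_kernelMul [SFinite ν] {A : α × β → ℝ≥0∞} {B : β × γ → ℝ≥0∞}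
    (hA : Measurable A) (hB : Measurable B) : Measurable (kernelMul ν A B) :=
  Measurable.lintegral_prod_right' (f := fun q : (α × γ) × β => A (q.1.1, q.2) * B (q.2, q.1.2))
    (by fun_prop)

lemma essSup_lintegral_kernelMul_le [SFinite ν] [SFinite ρ] {A : α × β → ℝ≥0∞}
    {B : β × γ → ℝ≥0∞} (hA : Measurable A) (hB : Measurable B) :
    essSup (fun x => ∫⁻ z, kernelMul ν A B (x, z) ∂ρ) μ ≤
      essSup (fun x => ∫⁻ y, A (x, y) ∂ν) μ * essSup (fun y => ∫⁻ z, B (y, z) ∂ρ) ν := by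
  refine essSup_le_of_ae_le _
    ((ENNReal.ae_le_essSup fun x => ∫⁻ y, A (x, y) ∂ν).mono fun x hx => ?_)
  calc ∫⁻ z, kernelMul ν A B (x, z) ∂ρ = ∫⁻ y, A (x, y) * ∫⁻ z, B (y, z) ∂ρ ∂ν := by
        simp only [kernelMul]
        rw [lintegral_lintegral_swap (by fun_prop)]
        exact lintegral_congr fun y => lintegral_const_mul _ (by fun_prop)
    _ ≤ ∫⁻ y, A (x, y) * essSup (fun y => ∫⁻ z, B (y, z) ∂ρ) ν ∂ν :=
        lintegral_mono_ae ((ENNReal.ae_le_essSup _).mono fun y hy => by gcongr)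
    _ ≤ _ := by
        rw [lintegral_mul_const _ (by fun_prop)]
        exact mul_le_mul_left hx _

lemma normA_mono {f g : α × β → ℝ≥0∞} (h : ∀ p, f p ≤ g p) : normA μ ν f ≤ normA μ ν g :=
  max_le_max (essSup_mono_ae (ae_of_all _ fun _ => lintegral_mono fun _ => h _))
    (essSup_mono_ae (ae_of_all _ fun _ => lintegral_mono fun _ => h _))

lemma normA_const_mul {c : ℝ≥0∞} (hc : c ≠ ∞) (f : α × β → ℝ≥0∞) :
    normA μ ν (fun p => c * f p) = c * normA μ ν f := by
  simp only [normA, lintegral_const_mul' c _ hc, ENNReal.essSup_const_mul]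
  exact (mul_max_of_nonneg _ _ zero_le).symm

lemma normA_kernelMul_le [SFinite μ] [SFinite ν] [SFinite ρ] {A : α × β → ℝ≥0∞}
    {B : β × γ → ℝ≥0∞} (hA : Measurable A) (hB : Measurable B) :
    normA μ ρ (kernelMul ν A B) ≤ normA μ ν A * normA ν ρ B := by
  refine max_le ((essSup_lintegral_kernelMul_le hA hB).trans
    (mul_le_mul' (le_max_left _ _) (le_max_left _ _))) ?_
  have h := essSup_lintegral_kernelMul_le (μ := ρ) (ν := ν) (ρ := μ)
    (A := fun q => B q.swap) (B := fun q => A q.swap) (by fun_prop) (by fun_prop)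
  simp only [kernelMul, Prod.swap_prod_mk, mul_comm (B _)] at h
  rw [mul_comm]
  exact h.trans (mul_le_mul' (le_max_right _ _) (le_max_right _ _))

lemma essSup_lintegral_lintegral_le [SFinite μ] [SFinite ν] [SFinite ρ]
    {M : γ × (α × β) → ℝ≥0∞} (hM : Measurable M) :
    essSup (fun x => ∫⁻ y, ∫⁻ z, M (z, (x, y)) ∂ρ ∂ν) μ ≤
      ∫⁻ z, essSup (fun x => ∫⁻ y, M (z, (x, y)) ∂ν) μ ∂ρ := by
  have hswap (x : α) :
      ∫⁻ y, ∫⁻ z, M (z, (x, y)) ∂ρ ∂ν = ∫⁻ z, ∫⁻ y, M (z, (x, y)) ∂ν ∂ρ :=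
    lintegral_lintegral_swap (by fun_prop)
  simp only [hswap]
  exact essSup_lintegral_le_lintegral_essSup_s7 (f := fun q : α × γ => ∫⁻ y, M (q.2, (q.1, y)) ∂ν)
    (Measurable.lintegral_prod_right' (f := fun r : (α × γ) × β => M (r.1.2, (r.1.1, r.2)))
      (by fun_prop))

lemma normA_lintegral_le [SFinite μ] [SFinite ν] [SFinite ρ] {M : γ × (α × β) → ℝ≥0∞}
    (hM : Measurable M) :
    normA μ ν (fun t => ∫⁻ z, M (z, t) ∂ρ) ≤ ∫⁻ z, normA μ ν (fun t => M (z, t)) ∂ρ := by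
  refine max_le ((essSup_lintegral_lintegral_le hM).trans
    (lintegral_mono fun z => le_max_left _ _)) ?_
  exact (essSup_lintegral_lintegral_le (μ := ν) (ν := μ) (M := fun q => M (q.1, q.2.swap))
    (by fun_prop)).trans (lintegral_mono fun z => le_max_right _ _)

theorem Measurable.normA_prod_left [SFinite μ] [SFinite ν] {f : (α × β) × γ → ℝ≥0∞}
    (hf : Measurable f) : Measurable fun z => normA μ ν (fun t => f (t, z)) := by
  have hrow : Measurable fun q : α × γ => ∫⁻ y, f ((q.1, y), q.2) ∂ν :=
    Measurable.lintegral_prod_right' (f := fun r : (α × γ) × β => f ((r.1.1, r.2), r.1.2))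
      (by fun_prop)
  have hcol : Measurable fun q : β × γ => ∫⁻ x, f ((x, q.1), q.2) ∂μ :=
    Measurable.lintegral_prod_right' (f := fun r : (β × γ) × α => f ((r.2, r.1.1), r.1.2))
      (by fun_prop)
  exact hrow.essSup_prod_left.max hcol.essSup_prod_left

lemma ae_lt_top_of_normA_lt_top [SFinite ν] {f : α × β → ℝ≥0∞} (hf : Measurable f)
    (h : normA μ ν f < ∞) : ∀ᵐ p ∂μ.prod ν, f p < ∞ := by
  rw [Measure.ae_prod_iff_ae_ae (measurableSet_lt hf measurable_const)]
  exact (ae_lt_of_essSup_lt ((le_max_left _ _).trans_lt h)).mono fun x hx =>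
    ae_lt_top (by fun_prop) hx.ne

theorem MeasureTheory.measurePreserving_prodProdProdComm (μa : Measure α)
    (μb : Measure β) (μc : Measure γ) (μd : Measure δ) [SFinite μa] [SFinite μb] [SFinite μc]
    [SFinite μd] :
    MeasurePreserving (fun p : (α × β) × (γ × δ) => ((p.1.1, p.2.1), (p.1.2, p.2.2)))
      ((μa.prod μb).prod (μc.prod μd)) ((μa.prod μc).prod (μb.prod μd)) := by
  have inner : MeasurePreserving (fun q : β × (γ × δ) => (q.2.1, (q.1, q.2.2)))
      (μb.prod (μc.prod μd)) (μc.prod (μb.prod μd)) :=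
    (measurePreserving_prodAssoc μc μb μd).comp ((Measure.measurePreserving_swap.prod
      (MeasurePreserving.id μd)).comp (measurePreserving_prodAssoc μb μc μd).symm)
  exact (measurePreserving_prodAssoc μa μc (μb.prod μd)).symm.comp
    (((MeasurePreserving.id μa).prod inner).comp (measurePreserving_prodAssoc μa μb _))

end Schur

section Weighted

variable {α β γ 𝕜 : Type*} [NormedDivisionRing 𝕜]

/-- `normBm … ω K` is by definition `normB … (weightedKernel ω K)`. -/
def weightedKernel (ω : α × β → ℝ) (K : α × β → 𝕜) (z : α × β) : ℝ≥0∞ :=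
  ENNReal.ofReal (ω z) * ‖K z‖ₑ

lemma measurable_weightedKernel [MeasurableSpace α] [MeasurableSpace β] [MeasurableSpace 𝕜]
    [OpensMeasurableSpace 𝕜] {ω : α × β → ℝ} {K : α × β → 𝕜} (hω : Measurable ω)
    (hK : Measurable K) :
    Measurable (weightedKernel ω K) :=
  (ENNReal.measurable_ofReal.comp hω).mul hK.enorm

lemma ofReal_mul_enorm_mul_le {t C w s : ℝ} (hC : 0 ≤ C) (hw : 0 ≤ w) (h : t ≤ C * w * s)
    (a b : 𝕜) :
    ENNReal.ofReal t * ‖a * b‖ₑ ≤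
      ENNReal.ofReal C * ((ENNReal.ofReal w * ‖a‖ₑ) * (ENNReal.ofReal s * ‖b‖ₑ)) :=
  calc ENNReal.ofReal t * ‖a * b‖ₑ ≤ ENNReal.ofReal (C * w * s) * (‖a‖ₑ * ‖b‖ₑ) := by
        rw [enorm_mul]
        exact mul_le_mul_left (ENNReal.ofReal_le_ofReal h) _
    _ = _ := by
        rw [ENNReal.ofReal_mul (mul_nonneg hC hw), ENNReal.ofReal_mul hC]
        ring

lemma ofReal_mul_lintegral_enorm_mul_le_kernelMul [MeasurableSpace β] {ν : Measure β}
    {ω : α × β → ℝ} {σ : β × γ → ℝ} {τ : α × γ → ℝ} {C : ℝ} (hC : 0 ≤ C) (hω : ∀ z, 0 ≤ ω z)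
    (hτ : ∀ x y z, τ (x, z) ≤ C * ω (x, y) * σ (y, z)) (K : α × β → 𝕜) (L : β × γ → 𝕜)
    (p : α × γ) :
    ENNReal.ofReal (τ p) * ∫⁻ y, ‖K (p.1, y) * L (y, p.2)‖ₑ ∂ν ≤
      ENNReal.ofReal C * kernelMul ν (weightedKernel ω K) (weightedKernel σ L) p := by
  simp only [kernelMul, ← lintegral_const_mul' _ _ ENNReal.ofReal_ne_top]
  exact lintegral_mono fun y => ofReal_mul_enorm_mul_le hC (hω _) (hτ p.1 y p.2) _ _

end Weighted

section Product

variable {X₁ X₂ Y₁ Y₂ Z₁ Z₂ : Type*} [MeasurableSpace X₁] [MeasurableSpace X₂]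
  [MeasurableSpace Y₁] [MeasurableSpace Y₂] [MeasurableSpace Z₁] [MeasurableSpace Z₂]
  {μ₁ : Measure X₁} {μ₂ : Measure X₂} {ν₁ : Measure Y₁} {ν₂ : Measure Y₂}
  {ρ₁ : Measure Z₁} {ρ₂ : Measure Z₂}

/-- `(x₂, y₂) ↦ ‖K^{(x₂,y₂)}‖_{𝒜(X₁,Y₁)}`, so that by definition
`normB μ₁ μ₂ ν₁ ν₂ K = normA μ₂ ν₂ (sliceNormA μ₁ ν₁ K)`. -/
def sliceNormA (μ₁ : Measure X₁) (ν₁ : Measure Y₁) (K : (X₁ × X₂) × (Y₁ × Y₂) → ℝ≥0∞)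
    (s : X₂ × Y₂) : ℝ≥0∞ :=
  normA μ₁ ν₁ fun t => K ((t.1, s.1), (t.2, s.2))

lemma measurable_sliceNormA [SFinite μ₁] [SFinite ν₁] {K : (X₁ × X₂) × (Y₁ × Y₂) → ℝ≥0∞}
    (hK : Measurable K) : Measurable (sliceNormA μ₁ ν₁ K) :=
  Measurable.normA_prod_left
    (f := fun q : (X₁ × Y₁) × (X₂ × Y₂) => K ((q.1.1, q.2.1), (q.1.2, q.2.2))) (by fun_prop)

lemma sliceNormA_kernelMul_le [SFinite μ₁] [SFinite ν₁] [SFinite ν₂] [SFinite ρ₁]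
    {A : (X₁ × X₂) × (Y₁ × Y₂) → ℝ≥0∞} {B : (Y₁ × Y₂) × (Z₁ × Z₂) → ℝ≥0∞}
    (hA : Measurable A) (hB : Measurable B) (s : X₂ × Z₂) :
    sliceNormA μ₁ ρ₁ (kernelMul (ν₁.prod ν₂) A B) s ≤
      kernelMul ν₂ (sliceNormA μ₁ ν₁ A) (sliceNormA ν₁ ρ₁ B) s := by
  set A' : Y₂ → X₁ × Y₁ → ℝ≥0∞ := fun y₂ u => A ((u.1, s.1), (u.2, y₂))
  set B' : Y₂ → Y₁ × Z₁ → ℝ≥0∞ := fun y₂ u => B ((u.1, y₂), (u.2, s.2))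
  set M : Y₂ × (X₁ × Z₁) → ℝ≥0∞ := fun q => kernelMul ν₁ (A' q.1) (B' q.1) q.2
  have hM : Measurable M := Measurable.lintegral_prod_right'
    (f := fun r : (Y₂ × (X₁ × Z₁)) × Y₁ =>
      A ((r.1.2.1, s.1), (r.2, r.1.1)) * B ((r.2, r.1.1), (r.1.2.2, s.2))) (by fun_prop)
  have hfubini (t : X₁ × Z₁) :
      kernelMul (ν₁.prod ν₂) A B ((t.1, s.1), (t.2, s.2)) = ∫⁻ y₂, M (y₂, t) ∂ν₂ :=
    lintegral_prod_symm' (fun y => A ((t.1, s.1), y) * B (y, (t.2, s.2))) (by fun_prop)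
  have hschur (y₂ : Y₂) :
      normA μ₁ ρ₁ (fun t => M (y₂, t)) ≤ normA μ₁ ν₁ (A' y₂) * normA ν₁ ρ₁ (B' y₂) :=
    normA_kernelMul_le (A := A' y₂) (B := B' y₂) (hA.comp (by fun_prop)) (hB.comp (by fun_prop))
  calc sliceNormA μ₁ ρ₁ (kernelMul (ν₁.prod ν₂) A B) s
      = normA μ₁ ρ₁ (fun t => ∫⁻ y₂, M (y₂, t) ∂ν₂) := by simp only [sliceNormA, hfubini]
    _ ≤ ∫⁻ y₂, normA μ₁ ρ₁ (fun t => M (y₂, t)) ∂ν₂ := normA_lintegral_le hM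
    _ ≤ ∫⁻ y₂, normA μ₁ ν₁ (A' y₂) * normA ν₁ ρ₁ (B' y₂) ∂ν₂ := lintegral_mono hschur

lemma normB_kernelMul_le [SFinite μ₁] [SFinite μ₂] [SFinite ν₁] [SFinite ν₂] [SFinite ρ₁]
    [SFinite ρ₂] {A : (X₁ × X₂) × (Y₁ × Y₂) → ℝ≥0∞} {B : (Y₁ × Y₂) × (Z₁ × Z₂) → ℝ≥0∞}
    (hA : Measurable A) (hB : Measurable B) :
    normB μ₁ μ₂ ρ₁ ρ₂ (kernelMul (ν₁.prod ν₂) A B) ≤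
      normB μ₁ μ₂ ν₁ ν₂ A * normB ν₁ ν₂ ρ₁ ρ₂ B :=
  (normA_mono (sliceNormA_kernelMul_le hA hB)).trans
    (normA_kernelMul_le (measurable_sliceNormA hA) (measurable_sliceNormA hB))

lemma normB_mono {f g : (X₁ × X₂) × (Y₁ × Y₂) → ℝ≥0∞} (h : ∀ p, f p ≤ g p) :
    normB μ₁ μ₂ ν₁ ν₂ f ≤ normB μ₁ μ₂ ν₁ ν₂ g :=
  normA_mono fun _ => normA_mono fun _ => h _

lemma normB_const_mul {c : ℝ≥0∞} (hc : c ≠ ∞) (f : (X₁ × X₂) × (Y₁ × Y₂) → ℝ≥0∞) :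
    normB μ₁ μ₂ ν₁ ν₂ (fun p => c * f p) = c * normB μ₁ μ₂ ν₁ ν₂ f := by
  simp only [normB, normA_const_mul hc]

lemma ae_lt_top_of_normB_lt_top [SFinite μ₁] [SFinite μ₂] [SFinite ρ₁] [SFinite ρ₂]
    {P : (X₁ × X₂) × (Z₁ × Z₂) → ℝ≥0∞} (hP : Measurable P) (h : normB μ₁ μ₂ ρ₁ ρ₂ P < ∞) :
    ∀ᵐ p ∂(μ₁.prod μ₂).prod (ρ₁.prod ρ₂), P p < ∞ := by
  -- `P` with its variables regrouped as `((x₂, z₂), (x₁, z₁))`, the order used by `normB`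
  set P' : (X₂ × Z₂) × (X₁ × Z₁) → ℝ≥0∞ := fun q => P ((q.2.1, q.1.1), (q.2.2, q.1.2))
  have hP' : Measurable P' := hP.comp (by fun_prop)
  have hslices : ∀ᵐ s ∂μ₂.prod ρ₂, ∀ᵐ t ∂μ₁.prod ρ₁, P' (s, t) < ∞ :=
    (ae_lt_top_of_normA_lt_top (measurable_sliceNormA hP) h).mono fun s hs =>
      ae_lt_top_of_normA_lt_top (f := fun t => P' (s, t)) (hP'.comp (by fun_prop)) hs
  have hshuffled : ∀ᵐ q ∂(μ₂.prod ρ₂).prod (μ₁.prod ρ₁), P' q < ∞ :=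
    (Measure.ae_prod_iff_ae_ae (measurableSet_lt hP' measurable_const)).2 hslices
  exact (Measure.measurePreserving_swap.comp
    (measurePreserving_prodProdProdComm μ₁ μ₂ ρ₁ ρ₂)).quasiMeasurePreserving.ae hshuffled

end Product

theorem Bm_product_general
    {X₁ X₂ Y₁ Y₂ Z₁ Z₂ : Type*} [MeasurableSpace X₁] [MeasurableSpace X₂]
    [MeasurableSpace Y₁] [MeasurableSpace Y₂] [MeasurableSpace Z₁] [MeasurableSpace Z₂]
    (μ₁ : Measure X₁) (μ₂ : Measure X₂) (ν₁ : Measure Y₁) (ν₂ : Measure Y₂)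
    (ρ₁ : Measure Z₁) (ρ₂ : Measure Z₂)
    [SigmaFinite μ₁] [SigmaFinite μ₂] [SigmaFinite ν₁] [SigmaFinite ν₂]
    [SigmaFinite ρ₁] [SigmaFinite ρ₂]
    (ω : (X₁ × X₂) × (Y₁ × Y₂) → ℝ) (σ : (Y₁ × Y₂) × (Z₁ × Z₂) → ℝ)
    (τ : (X₁ × X₂) × (Z₁ × Z₂) → ℝ)
    (hω : Measurable ω) (hσ : Measurable σ)
    (hω_pos : ∀ z, 0 < ω z) (hτ_pos : ∀ z, 0 < τ z)
    (C : ℝ) (hC : 0 < C)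
    (hτle : ∀ (x : X₁ × X₂) (y : Y₁ × Y₂) (z : Z₁ × Z₂),
      τ (x, z) ≤ C * ω (x, y) * σ (y, z))
    (K : (X₁ × X₂) × (Y₁ × Y₂) → ℂ) (L : (Y₁ × Y₂) × (Z₁ × Z₂) → ℂ)
    (hK : Measurable K) (hL : Measurable L)
    (hKB : normBm μ₁ μ₂ ν₁ ν₂ ω K < ∞) (hLB : normBm ν₁ ν₂ ρ₁ ρ₂ σ L < ∞) :
    (∀ᵐ p ∂((μ₁.prod μ₂).prod (ρ₁.prod ρ₂)),
      Integrable (fun y => K (p.1, y) * L (y, p.2)) (ν₁.prod ν₂)) ∧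
    normBm μ₁ μ₂ ρ₁ ρ₂ τ
        (fun p => ∫ y, K (p.1, y) * L (y, p.2) ∂(ν₁.prod ν₂)) < ∞ ∧
    normBm μ₁ μ₂ ρ₁ ρ₂ τ (fun p => ∫ y, K (p.1, y) * L (y, p.2) ∂(ν₁.prod ν₂)) ≤
      ENNReal.ofReal C * normBm μ₁ μ₂ ν₁ ν₂ ω K * normBm ν₁ ν₂ ρ₁ ρ₂ σ L := by
  have hA := measurable_weightedKernel hω hK
  have hB := measurable_weightedKernel hσ hL
  have hAB : normB μ₁ μ₂ ρ₁ ρ₂ (kernelMul (ν₁.prod ν₂) (weightedKernel ω K) (weightedKernel σ L)) ≤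
      normBm μ₁ μ₂ ν₁ ν₂ ω K * normBm ν₁ ν₂ ρ₁ ρ₂ σ L :=
    normB_kernelMul_le hA hB
  have hdom := ofReal_mul_lintegral_enorm_mul_le_kernelMul (ν := ν₁.prod ν₂) hC.le
    (fun z => (hω_pos z).le) hτle K L
  have hbound : normBm μ₁ μ₂ ρ₁ ρ₂ τ (fun p => ∫ y, K (p.1, y) * L (y, p.2) ∂(ν₁.prod ν₂)) ≤
      ENNReal.ofReal C * normBm μ₁ μ₂ ν₁ ν₂ ω K * normBm ν₁ ν₂ ρ₁ ρ₂ σ L := by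
    refine (normB_mono fun p =>
      (mul_le_mul_right (enorm_integral_le_lintegral_enorm _) _).trans (hdom p)).trans ?_
    rw [normB_const_mul ENNReal.ofReal_ne_top, mul_assoc]
    exact mul_le_mul_right hAB _
  refine ⟨?_, hbound.trans_lt (by finiteness), hbound⟩
  filter_upwards [ae_lt_top_of_normB_lt_top (measurable_kernelMul hA hB)
    (hAB.trans_lt (ENNReal.mul_lt_top hKB hLB))] with p hp
  refine ⟨(by fun_prop : Measurable fun y => K (p.1, y) * L (y, p.2)).aestronglyMeasurable, ?_⟩
  exact ENNReal.lt_top_of_mul_ne_top_right ((hdom p).trans_lt (by finiteness)).ne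
    (ENNReal.ofReal_pos.2 (hτ_pos p)).ne'

/-- Products of kernels in the spaces `𝓑`
(Proposition `prop:NewKernelModuleBasicProperties2` (2)). -/
theorem Bm_product
    {X₁ X₂ Y₁ Y₂ Z₁ Z₂ : Type*} [MeasurableSpace X₁] [MeasurableSpace X₂]
    [MeasurableSpace Y₁] [MeasurableSpace Y₂] [MeasurableSpace Z₁] [MeasurableSpace Z₂]
    (μ₁ : Measure X₁) (μ₂ : Measure X₂) (ν₁ : Measure Y₁) (ν₂ : Measure Y₂)
    (ρ₁ : Measure Z₁) (ρ₂ : Measure Z₂)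
    [SigmaFinite μ₁] [SigmaFinite μ₂] [SigmaFinite ν₁] [SigmaFinite ν₂]
    [SigmaFinite ρ₁] [SigmaFinite ρ₂]
    (ω : (X₁ × X₂) × (Y₁ × Y₂) → ℝ) (σ : (Y₁ × Y₂) × (Z₁ × Z₂) → ℝ)
    (τ : (X₁ × X₂) × (Z₁ × Z₂) → ℝ)
    (hω : Measurable ω) (hσ : Measurable σ) (hτ : Measurable τ)
    (hω_pos : ∀ z, 0 < ω z) (hσ_pos : ∀ z, 0 < σ z) (hτ_pos : ∀ z, 0 < τ z)
    (C : ℝ) (hC : 0 < C)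
    (hτle : ∀ (x : X₁ × X₂) (y : Y₁ × Y₂) (z : Z₁ × Z₂),
      τ (x, z) ≤ C * ω (x, y) * σ (y, z))
    (K : (X₁ × X₂) × (Y₁ × Y₂) → ℂ) (L : (Y₁ × Y₂) × (Z₁ × Z₂) → ℂ)
    (hK : Measurable K) (hL : Measurable L)
    (hKB : normBm μ₁ μ₂ ν₁ ν₂ ω K < ∞) (hLB : normBm ν₁ ν₂ ρ₁ ρ₂ σ L < ∞) :
    (∀ᵐ p ∂((μ₁.prod μ₂).prod (ρ₁.prod ρ₂)),
      Integrable (fun y => K (p.1, y) * L (y, p.2)) (ν₁.prod ν₂)) ∧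
    normBm μ₁ μ₂ ρ₁ ρ₂ τ
        (fun p => ∫ y, K (p.1, y) * L (y, p.2) ∂(ν₁.prod ν₂)) < ∞ ∧
    normBm μ₁ μ₂ ρ₁ ρ₂ τ (fun p => ∫ y, K (p.1, y) * L (y, p.2) ∂(ν₁.prod ν₂)) ≤
      ENNReal.ofReal C * normBm μ₁ μ₂ ν₁ ν₂ ω K * normBm ν₁ ν₂ ρ₁ ρ₂ σ L :=
  Bm_product_general μ₁ μ₂ ν₁ ν₂ ρ₁ ρ₂ ω σ τ hω hσ hω_pos hτ_pos C hC hτle K L hK hL hKB hLB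

end
end

section
/- Let (X, F, μ) = (X₁ × X₂, F₁ ⊗ F₂, μ₁ ⊗ μ₂), where (X₁, μ₁) and (X₂, μ₂) are σ-finite measure spaces. Let A be a solid function space on X with A ≠ {0}, and let v : X → (0,∞) be measurable. Then there exists a measurable set E ⊆ X with μ(E) > 0 such that the indicator function 1_E belongs to A ∩ 𝒢_v(μ) ∩ 𝒢(μ). -/
/-!
Take `f ∈ A` that is not a.e. zero. Its support is exhausted by the sets `T n` on which
`|f| ≥ 1/(n+1)` and `|v| ≤ n`, cut down to the `n`-th product of finite-measure pieces of `X₁` and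
`X₂`; so some `E = T n` has positive measure. On `E` we have `1_E ≤ (n+1)|f|`, hence `1_E ∈ A` by
solidity, while `1_E` and `v 1_E` are dominated by constant multiples of the indicator of a
rectangle of finite measure, which lies in `L¹`, `L^∞`, `L^{1,∞}` and `L^{∞,1}`.
-/

open MeasureTheory ENNReal Filter

noncomputable section

/-- A solid (normed) function space on a measure space: a normed vector space of
(equivalence classes of a.e.-equal) measurable complex-valued functions such that
membership and norm only depend on the a.e.-magnitude of the function. -/
structure SolidFunctionSpace (α : Type*) [MeasurableSpace α] (μ : Measure α) where
  Mem : (α → ℂ) → Prop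
  norm : (α → ℂ) → ℝ
  mem_measurable : ∀ f, Mem f → Measurable f
  mem_congr : ∀ f g, Mem f → Measurable g → f =ᵐ[μ] g → Mem g
  norm_congr : ∀ f g, Mem f → Mem g → f =ᵐ[μ] g → norm f = norm g
  zero_mem : Mem 0
  add_mem : ∀ f g, Mem f → Mem g → Mem (f + g)
  smul_mem : ∀ (c : ℂ) (f), Mem f → Mem (c • f)
  norm_nonneg' : ∀ f, Mem f → 0 ≤ norm f
  norm_eq_zero_iff : ∀ f, Mem f → (norm f = 0 ↔ f =ᵐ[μ] 0)
  norm_add_le : ∀ f g, Mem f → Mem g → norm (f + g) ≤ norm f + norm g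
  norm_smul' : ∀ (c : ℂ) (f), Mem f → norm (c • f) = ‖c‖ * norm f
  solid : ∀ f g, Mem f → Measurable g → (∀ᵐ x ∂μ, ‖g x‖ ≤ ‖f x‖) →
    Mem g ∧ norm g ≤ norm f

lemma lpNormENN_mono {α : Type*} [MeasurableSpace α] (μ : Measure α) (p : ℝ≥0∞)
    {f g : α → ℝ≥0∞} (h : ∀ x, f x ≤ g x) : lpNormENN μ p f ≤ lpNormENN μ p g := by
  unfold lpNormENN
  split
  · exact essSup_mono_ae (Eventually.of_forall h)
  · exact ENNReal.rpow_le_rpow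
      (lintegral_mono fun x => ENNReal.rpow_le_rpow (h x) ENNReal.toReal_nonneg)
      (by positivity)

lemma lpNormENN_eq_eLpNorm {α : Type*} [MeasurableSpace α] (μ : Measure α) {p : ℝ≥0∞}
    (hp : p ≠ 0) (f : α → ℝ≥0∞) : lpNormENN μ p f = eLpNorm f p μ := by
  unfold lpNormENN
  split_ifs with hp_top
  · simp [hp_top, eLpNormEssSup]
  · simp [eLpNorm_eq_lintegral_rpow_enorm_toReal hp hp_top]

lemma lpNormENN_indicator_const_lt_top {α : Type*} [MeasurableSpace α] (μ : Measure α)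
    {p : ℝ≥0∞} (hp : p ≠ 0) {s : Set α} (hs : μ s < ∞) {c : ℝ≥0∞} (hc : c ≠ ∞) :
    lpNormENN μ p (s.indicator fun _ => c) < ∞ := by
  rw [lpNormENN_eq_eLpNorm μ hp]
  exact (eLpNorm_indicator_const_le c p).trans_lt
    (mul_lt_top hc.lt_top (rpow_lt_top_of_nonneg (by positivity) hs.ne))

section MixedNorm

variable {α β : Type*} [MeasurableSpace α] [MeasurableSpace β] (μ₁ : Measure α) (μ₂ : Measure β)

lemma mixedNorm_mono (p q : ℝ≥0∞) {f g : α × β → ℂ} (h : ∀ x, ‖f x‖ ≤ ‖g x‖) :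
    mixedNorm μ₁ μ₂ p q f ≤ mixedNorm μ₁ μ₂ p q g :=
  lpNormENN_mono _ _ fun x₂ => lpNormENN_mono _ _ fun x₁ => by
    dsimp only
    exact_mod_cast h (x₁, x₂)

lemma Gnorm_mono {f g : α × β → ℂ} (h : ∀ x, ‖f x‖ ≤ ‖g x‖) :
    Gnorm μ₁ μ₂ f ≤ Gnorm μ₁ μ₂ g :=
  max_le_max (max_le_max (eLpNorm_mono h) (eLpNorm_mono h))
    (max_le_max (mixedNorm_mono μ₁ μ₂ 1 ∞ h) (mixedNorm_mono μ₁ μ₂ ∞ 1 h))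

lemma mixedNormENN_indicator_prod_lt_top {p q : ℝ≥0∞} (hp : p ≠ 0) (hq : q ≠ 0)
    {s : Set α} {t : Set β} (hs : μ₁ s < ∞) (ht : μ₂ t < ∞) {c : ℝ≥0∞} (hc : c ≠ ∞) :
    mixedNormENN μ₁ μ₂ p q ((s ×ˢ t).indicator fun _ => c) < ∞ := by
  have hslice : (fun x₂ => lpNormENN μ₁ p fun x₁ => (s ×ˢ t).indicator (fun _ => c) (x₁, x₂))
      = t.indicator fun _ => lpNormENN μ₁ p (s.indicator fun _ => c) := by
    ext x₂
    by_cases hx₂ : x₂ ∈ t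
    · rw [Set.indicator_of_mem hx₂]
      congr 1 with x₁
      by_cases hx₁ : x₁ ∈ s <;> simp [hx₁, hx₂]
    · simp [hx₂, Set.indicator, Set.mem_prod, lpNormENN_eq_eLpNorm μ₁ hp]
  unfold mixedNormENN
  rw [hslice]
  exact lpNormENN_indicator_const_lt_top μ₂ hq ht (lpNormENN_indicator_const_lt_top μ₁ hp hs hc).ne

lemma Gnorm_indicator_prod_lt_top [SFinite μ₂] (c : ℂ) {s : Set α} {t : Set β}
    (hs : MeasurableSet s) (ht : MeasurableSet t) (hsf : μ₁ s < ∞) (htf : μ₂ t < ∞) :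
    Gnorm μ₁ μ₂ ((s ×ˢ t).indicator fun _ => c) < ∞ := by
  have hrect : (μ₁.prod μ₂) (s ×ˢ t) ≠ ∞ := by
    rw [Measure.prod_prod]
    exact (mul_lt_top hsf htf).ne
  have hLp (p : ℝ≥0∞) : eLpNorm ((s ×ˢ t).indicator fun _ => c) p (μ₁.prod μ₂) < ∞ :=
    (memLp_indicator_const p (hs.prod ht) c (Or.inr hrect)).eLpNorm_lt_top
  have hmixed {p q : ℝ≥0∞} (hp : p ≠ 0) (hq : q ≠ 0) :
      mixedNorm μ₁ μ₂ p q ((s ×ˢ t).indicator fun _ => c) < ∞ := by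
    unfold mixedNorm
    simp only [nnnorm_indicator_eq_indicator_nnnorm, coe_indicator]
    exact mixedNormENN_indicator_prod_lt_top μ₁ μ₂ hp hq hsf htf coe_ne_top
  exact max_lt (max_lt (hLp 1) (hLp ∞))
    (max_lt (hmixed one_ne_zero top_ne_zero) (hmixed top_ne_zero one_ne_zero))

end MixedNorm

lemma norm_mul_indicator_one_le_indicator {γ : Type*} {E R : Set γ} (hER : E ⊆ R)
    {g : γ → ℂ} {c : ℂ} (hg : ∀ x ∈ E, ‖g x‖ ≤ ‖c‖) (x : γ) :
    ‖g x * E.indicator (fun _ => (1 : ℂ)) x‖ ≤ ‖R.indicator (fun _ => c) x‖ := by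
  by_cases hx : x ∈ E
  · simpa [hx, hER hx] using hg x hx
  · simp [hx]

section Truncation

variable {X₁ X₂ : Type*} [MeasurableSpace X₁] [MeasurableSpace X₂]
  (μ₁ : Measure X₁) (μ₂ : Measure X₂) [SigmaFinite μ₁] [SigmaFinite μ₂]

def truncationSet (f : X₁ × X₂ → ℂ) (v : X₁ × X₂ → ℝ) (n : ℕ) : Set (X₁ × X₂) :=
  (spanningSets μ₁ n ×ˢ spanningSets μ₂ n) ∩ {x | 1 / ((n : ℝ) + 1) ≤ ‖f x‖ ∧ ‖v x‖ ≤ n}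

variable {μ₁ μ₂} {f : X₁ × X₂ → ℂ} {v : X₁ × X₂ → ℝ}

lemma measurableSet_truncationSet (hf : Measurable f) (hv : Measurable v) (n : ℕ) :
    MeasurableSet (truncationSet μ₁ μ₂ f v n) :=
  ((measurableSet_spanningSets μ₁ n).prod (measurableSet_spanningSets μ₂ n)).inter
    ((measurableSet_le measurable_const hf.norm).inter (measurableSet_le hv.norm measurable_const))

lemma truncationSet_subset_prod (n : ℕ) :
    truncationSet μ₁ μ₂ f v n ⊆ spanningSets μ₁ n ×ˢ spanningSets μ₂ n :=
  Set.inter_subset_left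

lemma eventually_mem_truncationSet {x : X₁ × X₂} (hx : f x ≠ 0) :
    ∀ᶠ n in atTop, x ∈ truncationSet μ₁ μ₂ f v n := by
  have hfx : 0 < ‖f x‖ := norm_pos_iff.2 hx
  filter_upwards [eventually_ge_atTop (spanningSetsIndex μ₁ x.1),
    eventually_ge_atTop (spanningSetsIndex μ₂ x.2),
    (tendsto_one_div_add_atTop_nhds_zero_nat (𝕜 := ℝ)).eventually_le_const hfx,
    tendsto_natCast_atTop_atTop.eventually_ge_atTop ‖v x‖] with n h₁ h₂ hf hv
  exact ⟨⟨mem_spanningSets_of_index_le μ₁ x.1 h₁, mem_spanningSets_of_index_le μ₂ x.2 h₂⟩, hf, hv⟩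

lemma exists_measure_truncationSet_pos (hf : ¬ f =ᵐ[μ₁.prod μ₂] 0) :
    ∃ n, 0 < (μ₁.prod μ₂) (truncationSet μ₁ μ₂ f v n) := by
  by_contra! h
  have hcover : {x | f x ≠ 0} ⊆ ⋃ n, truncationSet μ₁ μ₂ f v n := fun x hx =>
    Set.mem_iUnion.2 (eventually_mem_truncationSet hx).exists
  refine hf (ae_iff.2 (measure_mono_null hcover (measure_iUnion_null fun n => ?_)))
  exact nonpos_iff_eq_zero.1 (h n)

lemma SolidFunctionSpace.indicator_truncationSet_mem {μ : Measure (X₁ × X₂)}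
    (A : SolidFunctionSpace (X₁ × X₂) μ) (hfA : A.Mem f) (hv : Measurable v) (n : ℕ) :
    A.Mem ((truncationSet μ₁ μ₂ f v n).indicator fun _ => (1 : ℂ)) := by
  have hind : Measurable ((truncationSet μ₁ μ₂ f v n).indicator fun _ => (1 : ℂ)) :=
    measurable_const.indicator
      (measurableSet_truncationSet (A.mem_measurable f hfA) hv n)
  refine (A.solid _ _ (A.smul_mem ((n + 1 : ℕ) : ℂ) f hfA) hind (Eventually.of_forall fun x => ?_)).1
  have hnorm : ‖((n + 1 : ℕ) : ℂ)‖ = (n : ℝ) + 1 := by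
    rw [Complex.norm_natCast, Nat.cast_succ]
  rw [Pi.smul_apply, norm_smul, hnorm]
  by_cases hx : x ∈ truncationSet μ₁ μ₂ f v n
  · have hfx : 1 / ((n : ℝ) + 1) ≤ ‖f x‖ := hx.2.1
    rw [div_le_iff₀ (by positivity)] at hfx
    simpa [hx, mul_comm] using hfx
  · simp only [Set.indicator_of_notMem hx, norm_zero]
    positivity

end Truncation

theorem solid_space_contains_good_indicator_general
    {X₁ X₂ : Type*} [MeasurableSpace X₁] [MeasurableSpace X₂]
    (μ₁ : Measure X₁) (μ₂ : Measure X₂) [SigmaFinite μ₁] [SigmaFinite μ₂]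
    (A : SolidFunctionSpace (X₁ × X₂) (μ₁.prod μ₂))
    (hA_ne : ∃ f, A.Mem f ∧ ¬ f =ᵐ[μ₁.prod μ₂] 0)
    (v : X₁ × X₂ → ℝ) (hv : Measurable v) :
    ∃ E : Set (X₁ × X₂), MeasurableSet E ∧ 0 < (μ₁.prod μ₂) E ∧
      A.Mem (E.indicator fun _ => (1 : ℂ)) ∧
      Gnorm μ₁ μ₂ (fun x => (v x : ℂ) * E.indicator (fun _ => (1 : ℂ)) x) < ∞ ∧
      Gnorm μ₁ μ₂ (E.indicator fun _ => (1 : ℂ)) < ∞ := by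
  obtain ⟨f, hfA, hf0⟩ := hA_ne
  obtain ⟨n, hn⟩ := exists_measure_truncationSet_pos (v := v) hf0
  have hR (c : ℂ) :
      Gnorm μ₁ μ₂ ((spanningSets μ₁ n ×ˢ spanningSets μ₂ n).indicator fun _ => c) < ∞ :=
    Gnorm_indicator_prod_lt_top μ₁ μ₂ c (measurableSet_spanningSets μ₁ n)
      (measurableSet_spanningSets μ₂ n) (measure_spanningSets_lt_top μ₁ n)
      (measure_spanningSets_lt_top μ₂ n)
  have hv_le : ∀ x ∈ truncationSet μ₁ μ₂ f v n, ‖(v x : ℂ)‖ ≤ ‖(n : ℂ)‖ := fun x hx => by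
    simpa using hx.2.2
  refine ⟨truncationSet μ₁ μ₂ f v n,
    measurableSet_truncationSet (A.mem_measurable f hfA) hv n, hn,
    A.indicator_truncationSet_mem hfA hv n, ?_, ?_⟩
  · exact (Gnorm_mono μ₁ μ₂
      (norm_mul_indicator_one_le_indicator (truncationSet_subset_prod n) hv_le)).trans_lt (hR n)
  · exact (Gnorm_mono μ₁ μ₂ (norm_indicator_le_of_subset (truncationSet_subset_prod n) _)).trans_lt
      (hR 1)

/-- A non-trivial solid function space contains an indicator function of a set of positive
measure lying in `𝒢 ∩ 𝒢_v` (Lemma `lem:SolidSpacesContainGoodFunctions`). -/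
theorem solid_space_contains_good_indicator
    {X₁ X₂ : Type*} [MeasurableSpace X₁] [MeasurableSpace X₂]
    (μ₁ : Measure X₁) (μ₂ : Measure X₂) [SigmaFinite μ₁] [SigmaFinite μ₂]
    (A : SolidFunctionSpace (X₁ × X₂) (μ₁.prod μ₂))
    (hA_ne : ∃ f, A.Mem f ∧ ¬ f =ᵐ[μ₁.prod μ₂] 0)
    (v : X₁ × X₂ → ℝ) (hv : Measurable v) (hv_pos : ∀ x, 0 < v x) :
    ∃ E : Set (X₁ × X₂), MeasurableSet E ∧ 0 < (μ₁.prod μ₂) E ∧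
      A.Mem (E.indicator fun _ => (1 : ℂ)) ∧
      Gnorm μ₁ μ₂ (fun x => (v x : ℂ) * E.indicator (fun _ => (1 : ℂ)) x) < ∞ ∧
      Gnorm μ₁ μ₂ (E.indicator fun _ => (1 : ℂ)) < ∞ :=
  solid_space_contains_good_indicator_general μ₁ μ₂ A hA_ne v hv

end
end

section
/- Let (X, F, μ) = (X₁ × X₂, F₁ ⊗ F₂, μ₁ ⊗ μ₂), where (X₁, μ₁) and (X₂, μ₂) are σ-finite measure spaces. Then for every V ∈ F₁ and W ∈ F₂, the indicator function satisfies ‖1_{V × W}‖_{𝓗(μ)} ≥ min{1, μ₁(V), μ₂(W), μ(V × W)}. -/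
/-!
Let `A ×ˢ B ⊆ V ×ˢ W` be a measurable rectangle with `a = μ₁ A < ∞` and `b = μ₂ B < ∞`.
Integrating a decomposition `1_{V × W} = g₁ + g₂ + g₃ + g₄` over `A ×ˢ B` and estimating each piece
by its own norm gives `a b ≤ ‖g₁‖_{L¹} + ‖g₂‖_{L^∞} a b + ‖g₃‖_{L^{1,∞}} b + ‖g₄‖_{L^{∞,1}} a`;
multiplying by `m = min {1, a, b, a b}` bounds every term on the right by `a b` times a norm, so `m`
is at most the sum of the four norms. By σ-finiteness, such rectangles exhaust `V ×ˢ W`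
monotonically, and `m` passes to the supremum.
-/

open MeasureTheory ENNReal Filter

noncomputable section

lemma setLIntegral_le_essSup_mul {α : Type*} [MeasurableSpace α] {μ : Measure α}
    (f : α → ℝ≥0∞) (s : Set α) : ∫⁻ x in s, f x ∂μ ≤ essSup f μ * μ s :=
  calc ∫⁻ x in s, f x ∂μ ≤ ∫⁻ _ in s, essSup f μ ∂μ :=
        lintegral_mono_ae (ae_restrict_of_ae (ae_le_essSup f))
    _ = essSup f μ * μ s := setLIntegral_const s _

lemma ENNReal.iSup_mul_iSup_of_monotone {ι : Type*} [Preorder ι] [IsDirectedOrder ι]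
    {f g : ι → ℝ≥0∞} (hf : Monotone f) (hg : Monotone g) :
    (⨆ i, f i) * ⨆ i, g i = ⨆ i, f i * g i := by
  simp only [ENNReal.iSup_mul, ENNReal.mul_iSup]
  refine le_antisymm (iSup₂_le fun j i => ?_) (iSup_le fun i => le_iSup₂_of_le i i le_rfl)
  obtain ⟨k, hik, hjk⟩ := exists_ge_ge i j
  exact le_iSup_of_le k (mul_le_mul' (hf hik) (hg hjk))

lemma min_min_iSup_eq_iSup_min_min {α ι : Type*} [CompleteLinearOrder α] [Preorder ι]
    [IsDirectedOrder ι] (x : α) {a b c : ι → α} (ha : Monotone a) (hb : Monotone b)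
    (hc : Monotone c) :
    min (min x (⨆ i, a i)) (min (⨆ i, b i) (⨆ i, c i)) =
      ⨆ i, min (min x (a i)) (min (b i) (c i)) := by
  rw [inf_iSup_eq, ← iSup_inf_of_monotone hb hc]
  exact (iSup_inf_of_monotone (fun _ _ h => min_le_min_left x (ha h)) (hb.inf hc)).symm

lemma min_le_add_of_mul_le_add {a b n₁ n₂ n₃ n₄ : ℝ≥0∞} (ha : a ≠ ∞) (hb : b ≠ ∞)
    (h : a * b ≤ n₁ + n₂ * (a * b) + n₃ * b + n₄ * a) :
    min (min 1 a) (min b (a * b)) ≤ n₁ + n₂ + n₃ + n₄ := by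
  set m := min (min 1 a) (min b (a * b))
  have hm1 : m ≤ 1 := (min_le_left _ _).trans (min_le_left _ _)
  have hma : m ≤ a := (min_le_left _ _).trans (min_le_right _ _)
  have hmb : m ≤ b := (min_le_right _ _).trans (min_le_left _ _)
  have hmab : m ≤ a * b := (min_le_right _ _).trans (min_le_right _ _)
  rcases eq_or_ne (a * b) 0 with hab | hab
  · exact (hmab.trans_eq hab).trans bot_le
  rw [← ENNReal.mul_le_mul_iff_left hab (ENNReal.mul_ne_top ha hb)]
  calc m * (a * b) ≤ (n₁ + n₂ * (a * b) + n₃ * b + n₄ * a) * m := by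
        rw [mul_comm]; gcongr
    _ = n₁ * m + n₂ * ((a * b) * m) + n₃ * (b * m) + n₄ * (a * m) := by ring
    _ ≤ n₁ * (a * b) + n₂ * ((a * b) * 1) + n₃ * (b * a) + n₄ * (a * b) := by
        gcongr
    _ = (n₁ + n₂ + n₃ + n₄) * (a * b) := by ring

section SigmaFinite

variable {α : Type*} [MeasurableSpace α] (μ : Measure α) [SigmaFinite μ] (s : Set α)

lemma monotone_measure_inter_spanningSets :
    Monotone fun n => μ (s ∩ spanningSets μ n) := fun _ _ h =>
  measure_mono (Set.inter_subset_inter_right _ (monotone_spanningSets μ h))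

lemma measure_eq_iSup_measure_inter_spanningSets : μ s = ⨆ n, μ (s ∩ spanningSets μ n) := by
  conv_lhs => rw [← Measure.iSup_restrict_spanningSets s]
  simp only [Measure.restrict_apply' (measurableSet_spanningSets μ _)]

lemma measure_inter_spanningSets_ne_top (n : ℕ) : μ (s ∩ spanningSets μ n) ≠ ∞ :=
  (measure_inter_lt_top_of_right_ne_top (measure_spanningSets_lt_top μ n).ne).ne

end SigmaFinite

section MixedNorm

variable {X₁ X₂ : Type*} [MeasurableSpace X₁] [MeasurableSpace X₂]
  {μ₁ : Measure X₁} {μ₂ : Measure X₂}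

lemma mixedNorm_one_top (g : X₁ × X₂ → ℂ) :
    mixedNorm μ₁ μ₂ 1 ∞ g = essSup (fun x₂ => ∫⁻ x₁, ‖g (x₁, x₂)‖ₑ ∂μ₁) μ₂ := by
  simp [mixedNorm, mixedNormENN, lpNormENN, enorm_eq_nnnorm]

lemma mixedNorm_top_one (g : X₁ × X₂ → ℂ) :
    mixedNorm μ₁ μ₂ ∞ 1 g = ∫⁻ x₂, essSup (fun x₁ => ‖g (x₁, x₂)‖ₑ) μ₁ ∂μ₂ := by
  simp [mixedNorm, mixedNormENN, lpNormENN, enorm_eq_nnnorm]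

end MixedNorm

section Rectangle

variable {X₁ X₂ : Type*} [MeasurableSpace X₁] [MeasurableSpace X₂]
  {μ₁ : Measure X₁} {μ₂ : Measure X₂} [SFinite μ₁] [SFinite μ₂] {g : X₁ × X₂ → ℂ}

lemma setLIntegral_prod_enorm_le_mixedNorm_one_top_mul (hg : Measurable g)
    (A : Set X₁) (B : Set X₂) :
    ∫⁻ z in A ×ˢ B, ‖g z‖ₑ ∂μ₁.prod μ₂ ≤ mixedNorm μ₁ μ₂ 1 ∞ g * μ₂ B := by
  rw [setLIntegral_prod_symm _ hg.enorm.aemeasurable, mixedNorm_one_top]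
  calc ∫⁻ x₂ in B, ∫⁻ x₁ in A, ‖g (x₁, x₂)‖ₑ ∂μ₁ ∂μ₂
      ≤ ∫⁻ _ in B, essSup (fun x₂ => ∫⁻ x₁, ‖g (x₁, x₂)‖ₑ ∂μ₁) μ₂ ∂μ₂ := by
        refine lintegral_mono_ae (ae_restrict_of_ae ?_)
        filter_upwards [ae_le_essSup (fun x₂ => ∫⁻ x₁, ‖g (x₁, x₂)‖ₑ ∂μ₁)] with x₂ hx₂
        exact (setLIntegral_le_lintegral _ _).trans hx₂
    _ = _ := setLIntegral_const _ _

lemma setLIntegral_prod_enorm_le_mixedNorm_top_one_mul (hg : Measurable g)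
    {A : Set X₁} (hA : μ₁ A ≠ ∞) (B : Set X₂) :
    ∫⁻ z in A ×ˢ B, ‖g z‖ₑ ∂μ₁.prod μ₂ ≤ mixedNorm μ₁ μ₂ ∞ 1 g * μ₁ A := by
  rw [setLIntegral_prod_symm _ hg.enorm.aemeasurable, mixedNorm_top_one,
    ← lintegral_mul_const' _ _ hA]
  calc ∫⁻ x₂ in B, ∫⁻ x₁ in A, ‖g (x₁, x₂)‖ₑ ∂μ₁ ∂μ₂
      ≤ ∫⁻ x₂ in B, essSup (fun x₁ => ‖g (x₁, x₂)‖ₑ) μ₁ * μ₁ A ∂μ₂ :=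
        lintegral_mono fun x₂ => setLIntegral_le_essSup_mul _ _
    _ ≤ _ := setLIntegral_le_lintegral _ _

lemma setLIntegral_prod_enorm_add_le {g₁ g₂ g₃ g₄ : X₁ × X₂ → ℂ}
    (hg₂ : Measurable g₂) (hg₃ : Measurable g₃) (hg₄ : Measurable g₄)
    {A : Set X₁} (hA : μ₁ A ≠ ∞) (B : Set X₂) :
    ∫⁻ z in A ×ˢ B, ‖(g₁ + g₂ + g₃ + g₄) z‖ₑ ∂μ₁.prod μ₂ ≤
      eLpNorm g₁ 1 (μ₁.prod μ₂) + eLpNorm g₂ ∞ (μ₁.prod μ₂) * (μ₁ A * μ₂ B) +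
        mixedNorm μ₁ μ₂ 1 ∞ g₃ * μ₂ B + mixedNorm μ₁ μ₂ ∞ 1 g₄ * μ₁ A := by
  calc ∫⁻ z in A ×ˢ B, ‖(g₁ + g₂ + g₃ + g₄) z‖ₑ ∂μ₁.prod μ₂
      ≤ ∫⁻ z in A ×ˢ B, ‖g₁ z‖ₑ + ‖g₂ z‖ₑ + ‖g₃ z‖ₑ + ‖g₄ z‖ₑ ∂μ₁.prod μ₂ :=
        lintegral_mono fun z => (enorm_add_le _ _).trans <| by
          gcongr; exact (enorm_add_le _ _).trans <| by gcongr; exact enorm_add_le _ _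
    _ = (∫⁻ z in A ×ˢ B, ‖g₁ z‖ₑ ∂μ₁.prod μ₂) + (∫⁻ z in A ×ˢ B, ‖g₂ z‖ₑ ∂μ₁.prod μ₂) +
          (∫⁻ z in A ×ˢ B, ‖g₃ z‖ₑ ∂μ₁.prod μ₂) + ∫⁻ z in A ×ˢ B, ‖g₄ z‖ₑ ∂μ₁.prod μ₂ := by
        rw [lintegral_add_right _ hg₄.enorm, lintegral_add_right _ hg₃.enorm,
          lintegral_add_right _ hg₂.enorm]
    _ ≤ _ := by
        gcongr
        · rw [eLpNorm_one_eq_lintegral_enorm]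
          exact setLIntegral_le_lintegral _ _
        · rw [← Measure.prod_prod]
          exact setLIntegral_le_essSup_mul _ _
        · exact setLIntegral_prod_enorm_le_mixedNorm_one_top_mul hg₃ A B
        · exact setLIntegral_prod_enorm_le_mixedNorm_top_one_mul hg₄ hA B

lemma min_measure_le_Hnorm_indicator_prod {V A : Set X₁} {W B : Set X₂}
    (hA : MeasurableSet A) (hB : MeasurableSet B)
    (hAV : A ⊆ V) (hBW : B ⊆ W) (hA_fin : μ₁ A ≠ ∞) (hB_fin : μ₂ B ≠ ∞) :
    min (min 1 (μ₁ A)) (min (μ₂ B) (μ₁ A * μ₂ B)) ≤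
      Hnorm μ₁ μ₂ ((V ×ˢ W).indicator fun _ => (1 : ℂ)) := by
  refine le_iInf₂ fun g ⟨_, hg₂, hg₃, hg₄, hdecomp⟩ =>
    min_le_add_of_mul_le_add hA_fin hB_fin ?_
  have h_one : ∀ z ∈ A ×ˢ B, ‖(V ×ˢ W).indicator (fun _ => (1 : ℂ)) z‖ₑ = 1 := fun z hz => by
    simp [Set.indicator_of_mem (Set.prod_mono hAV hBW hz)]
  calc μ₁ A * μ₂ B
      = ∫⁻ z in A ×ˢ B, ‖(V ×ˢ W).indicator (fun _ => (1 : ℂ)) z‖ₑ ∂μ₁.prod μ₂ := by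
        rw [setLIntegral_congr_fun (hA.prod hB) h_one, setLIntegral_one, Measure.prod_prod]
    _ ≤ _ := hdecomp ▸ setLIntegral_prod_enorm_add_le hg₂ hg₃ hg₄ hA_fin B

end Rectangle

/-- Lower bound for the `𝓗`-norm of the indicator of a measurable rectangle
(Lemma `lem:CartesianProductSumNorm`). -/
theorem indicator_Hnorm_lower_bound
    {X₁ X₂ : Type*} [MeasurableSpace X₁] [MeasurableSpace X₂]
    (μ₁ : Measure X₁) (μ₂ : Measure X₂) [SigmaFinite μ₁] [SigmaFinite μ₂]
    (V : Set X₁) (W : Set X₂) (hV : MeasurableSet V) (hW : MeasurableSet W) :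
    min (min 1 (μ₁ V)) (min (μ₂ W) ((μ₁.prod μ₂) (V ×ˢ W))) ≤
      Hnorm μ₁ μ₂ ((V ×ˢ W).indicator fun _ => (1 : ℂ)) := by
  have hV_mono := monotone_measure_inter_spanningSets μ₁ V
  have hW_mono := monotone_measure_inter_spanningSets μ₂ W
  rw [Measure.prod_prod, measure_eq_iSup_measure_inter_spanningSets μ₁ V,
    measure_eq_iSup_measure_inter_spanningSets μ₂ W,
    ENNReal.iSup_mul_iSup_of_monotone hV_mono hW_mono,
    min_min_iSup_eq_iSup_min_min 1 hV_mono hW_mono (hV_mono.mul' hW_mono)]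
  exact iSup_le fun n => min_measure_le_Hnorm_indicator_prod
    (hV.inter (measurableSet_spanningSets μ₁ n)) (hW.inter (measurableSet_spanningSets μ₂ n))
    Set.inter_subset_left Set.inter_subset_left
    (measure_inter_spanningSets_ne_top μ₁ V n) (measure_inter_spanningSets_ne_top μ₂ W n)

end
end

section
/- Let (X, F, μ) and (Y, G, ν) be σ-finite measure spaces and let ρ_⊗ be the iterated functional ρ_⊗(F) := ρ_Y( y ↦ ρ_X(F(·,y)) ) defined for measurable F : X × Y → [0,∞]. Then for every measurable F : X × Y → ℂ, (1/16) · ‖F‖_{𝓗(μ⊗ν)} ≤ ρ_⊗(|F|) ≤ ‖F‖_{𝓗(μ⊗ν)}, where 𝓗(μ⊗ν) is the sum space L¹ + L^∞ + L^{1,∞} + L^{∞,1} formed with X as the first factor and Y as the second factor of the product. -/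
open MeasureTheory ENNReal Filter

noncomputable section

/-!
Writing `(a - t)` for the truncated difference in `ℝ≥0∞`, `ρ(f) = inf_t (t + ∫ (f - t))`, and the
threshold `t = ρ(f)` is itself admissible: `∫ (f - ρ(f)) ≤ ρ(f)`. Applying the threshold formula
in `x` and then in `y` to a decomposition `F = f₁ + f₂ + f₃ + f₄` gives `ρ_⊗(|F|) ≤ ‖F‖_𝓗`.
Conversely, let `G(y) = ρ_X(|F(·,y)|)` and `T = ρ_⊗(|F|)`. Cutting `|F(x,y)|` at height `G(y)`,
the part above the cut has `x`-integral at most `G(y)`; it is put in `L^{1,∞}` where `G(y) ≤ 2T`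
and in `L¹` where `G(y) > 2T`, since there `G ≤ 2 (G - T)` and `∫ (G - T) ≤ T`. Cutting the part
below the cut at height `T` leaves an `L^∞` piece and an `L^{∞,1}` piece dominated by `G - T`.
Altogether `‖F‖_𝓗 ≤ 6 ρ_⊗(|F|)`.
-/
section Rho

variable {α : Type*} [MeasurableSpace α] {μ : Measure α} {f : α → ℝ≥0∞}

theorem lintegral_tsub_essSup_le {g h : α → ℝ≥0∞} (hfgh : ∀ᵐ x ∂μ, f x ≤ g x + h x) :
    ∫⁻ x, f x - essSup g μ ∂μ ≤ ∫⁻ x, h x ∂μ := by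
  refine lintegral_mono_ae ?_
  filter_upwards [hfgh, ENNReal.ae_le_essSup g] with x hx hg
  exact tsub_le_iff_left.mpr (hx.trans (add_le_add_left hg _))

theorem rho_le_add_lintegral_tsub (hf : Measurable f) (t : ℝ≥0∞) :
    rho μ f ≤ t + ∫⁻ x, f x - t ∂μ := by
  refine iInf₂_le_of_le (fun x => min (f x) t, fun x => f x - t) ⟨hf.min measurable_const,
    hf.sub measurable_const, funext fun x => by rw [Pi.add_apply, add_comm, tsub_add_min]⟩ ?_
  gcongr
  exact essSup_le_of_ae_le t (ae_of_all _ fun x => min_le_right _ _)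

theorem rho_eq_iInf_add_lintegral_tsub (hf : Measurable f) :
    rho μ f = ⨅ t, t + ∫⁻ x, f x - t ∂μ := by
  refine le_antisymm (le_iInf (rho_le_add_lintegral_tsub hf)) (le_iInf₂ ?_)
  rintro ⟨g, h⟩ ⟨-, -, rfl⟩
  exact iInf_le_of_le (essSup g μ)
    (add_le_add le_rfl (lintegral_tsub_essSup_le (ae_of_all _ fun x => le_rfl)))

theorem rho_le_essSup_add_lintegral (hf : Measurable f) {g h : α → ℝ≥0∞}
    (hfgh : ∀ᵐ x ∂μ, f x ≤ g x + h x) : rho μ f ≤ essSup g μ + ∫⁻ x, h x ∂μ :=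
  (rho_le_add_lintegral_tsub hf _).trans (add_le_add le_rfl (lintegral_tsub_essSup_le hfgh))

theorem iInf_add_lintegral_tsub_eq_iInf_rat (f : α → ℝ≥0∞) :
    ⨅ t, t + ∫⁻ x, f x - t ∂μ = ⨅ q : ℚ, ENNReal.ofReal q + ∫⁻ x, f x - ENNReal.ofReal q ∂μ := by
  refine le_antisymm (le_iInf fun q => iInf_le _ _) (le_iInf fun t => ?_)
  rcases eq_or_ne t ∞ with rfl | ht
  · simp
  refine ENNReal.le_of_forall_pos_le_add fun ε hε _ => ?_
  obtain ⟨q, -, htq, hqε⟩ :=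
    ENNReal.lt_iff_exists_rat_btwn.mp (ENNReal.lt_add_right ht (ENNReal.coe_ne_zero.mpr hε.ne'))
  calc ⨅ q : ℚ, ENNReal.ofReal q + ∫⁻ x, f x - ENNReal.ofReal q ∂μ
      ≤ ENNReal.ofReal q + ∫⁻ x, f x - ENNReal.ofReal q ∂μ := iInf_le _ q
    _ ≤ (t + ε) + ∫⁻ x, f x - t ∂μ :=
        add_le_add hqε.le (lintegral_mono fun x => tsub_le_tsub_left htq.le _)
    _ = t + ∫⁻ x, f x - t ∂μ + ε := by ring

theorem lintegral_tsub_le_of_rho_lt (hf : Measurable f) {r : ℝ≥0∞} (hr : rho μ f < r) :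
    ∫⁻ x, f x - r ∂μ ≤ r := by
  rw [rho_eq_iInf_add_lintegral_tsub hf, iInf_lt_iff] at hr
  obtain ⟨t, ht⟩ := hr
  calc ∫⁻ x, f x - r ∂μ ≤ ∫⁻ x, f x - t ∂μ :=
        lintegral_mono fun x => tsub_le_tsub_left (le_self_add.trans ht.le) _
    _ ≤ r := le_add_self.trans ht.le

theorem lintegral_tsub_rho_le (hf : Measurable f) : ∫⁻ x, f x - rho μ f ∂μ ≤ rho μ f := by
  rcases eq_or_ne (rho μ f) ∞ with hρ | hρ
  · simp [hρ]
  obtain ⟨r, hr_anti, hr_gt, hr_lim⟩ := exists_seq_strictAnti_tendsto' hρ.lt_top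
  have hr_inf : ⨅ n, r n = rho μ f := iInf_eq_of_tendsto hr_anti.antitone hr_lim
  have hmono : Monotone fun n x => f x - r n := fun m n hmn x =>
    tsub_le_tsub_left (hr_anti.antitone hmn) _
  have hsup : ∀ x, f x - rho μ f = ⨆ n, f x - r n := fun x => by
    rw [← hr_inf, ENNReal.sub_iInf]
  simp_rw [hsup]
  rw [lintegral_iSup (f := fun n x => f x - r n) (fun n => hf.sub measurable_const) hmono,
    ← hr_inf]
  refine iSup_le fun m => le_iInf fun n => ?_
  calc ∫⁻ x, f x - r m ∂μ ≤ ∫⁻ x, f x - r (max m n) ∂μ :=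
        lintegral_mono fun x => hmono (le_max_left m n) x
    _ ≤ r (max m n) := lintegral_tsub_le_of_rho_lt hf (hr_gt _).1
    _ ≤ r n := hr_anti.antitone (le_max_right m n)

end Rho

theorem Measurable.rho_prod_left {X Y : Type*} [MeasurableSpace X] [MeasurableSpace Y]
    {μ : Measure X} [SFinite μ] {A : X × Y → ℝ≥0∞} (hA : Measurable A) :
    Measurable fun y => rho μ fun x => A (x, y) := by
  have hrat : (fun y => rho μ fun x => A (x, y)) = fun y => ⨅ q : ℚ,
      ENNReal.ofReal q + ∫⁻ x, A (x, y) - ENNReal.ofReal q ∂μ := by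
    ext y
    exact (rho_eq_iInf_add_lintegral_tsub (hA.comp measurable_prodMk_right)).trans
      (iInf_add_lintegral_tsub_eq_iInf_rat _)
  rw [hrat]
  exact .iInf fun q => measurable_const.add ((hA.sub measurable_const).lintegral_prod_left')

section Product

variable {X Y : Type*} [MeasurableSpace X] [MeasurableSpace Y] {μ : Measure X} {ν : Measure Y}

theorem mixedNorm_one_top_s18 (f : X × Y → ℂ) :
    mixedNorm μ ν 1 ∞ f = essSup (fun y => ∫⁻ x, ‖f (x, y)‖ₑ ∂μ) ν := by
  simp [mixedNorm, mixedNormENN, lpNormENN, enorm]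

theorem mixedNorm_top_one_s18 (f : X × Y → ℂ) :
    mixedNorm μ ν ∞ 1 f = ∫⁻ y, essSup (fun x => ‖f (x, y)‖ₑ) μ ∂ν := by
  simp [mixedNorm, mixedNormENN, lpNormENN, enorm]

theorem essSup_essSup_le_eLpNorm_top [SFinite μ] [SFinite ν] {E : Type*}
    [NormedAddCommGroup E] [MeasurableSpace E] [OpensMeasurableSpace E] {f : X × Y → E}
    (hf : Measurable f) :
    essSup (fun y => essSup (fun x => ‖f (x, y)‖ₑ) μ) ν ≤ eLpNorm f ∞ (μ.prod ν) := by
  have hprod : ∀ᵐ z ∂μ.prod ν, ‖f z‖ₑ ≤ eLpNorm f ∞ (μ.prod ν) := ae_le_eLpNormEssSup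
  have hae : ∀ᵐ y ∂ν, ∀ᵐ x ∂μ, ‖f (x, y)‖ₑ ≤ eLpNorm f ∞ (μ.prod ν) :=
    (Measure.ae_ae_comm (p := fun x y => ‖f (x, y)‖ₑ ≤ eLpNorm f ∞ (μ.prod ν))
      (measurableSet_le hf.enorm measurable_const)).mp
      (Measure.ae_ae_of_ae_prod hprod)
  exact essSup_le_of_ae_le _ (hae.mono fun y hy => essSup_le_of_ae_le _ hy)

end Product

section UpperBound

variable {X Y : Type*} [MeasurableSpace X] [MeasurableSpace Y] {μ : Measure X} {ν : Measure Y}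
  [SFinite μ] [SFinite ν]

theorem rho_rho_le_of_eq_add {F f₁ f₂ f₃ f₄ : X × Y → ℂ} (hF : Measurable F)
    (h₁ : Measurable f₁) (h₂ : Measurable f₂) (hsum : F = f₁ + f₂ + f₃ + f₄) :
    rho ν (fun y => rho μ fun x => ‖F (x, y)‖ₑ) ≤ eLpNorm f₁ 1 (μ.prod ν) +
      eLpNorm f₂ ∞ (μ.prod ν) + mixedNorm μ ν 1 ∞ f₃ + mixedNorm μ ν ∞ 1 f₄ := by
  set I₁ := fun y => ∫⁻ x, ‖f₁ (x, y)‖ₑ ∂μ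
  set S₂ := fun y => essSup (fun x => ‖f₂ (x, y)‖ₑ) μ
  set I₃ := fun y => ∫⁻ x, ‖f₃ (x, y)‖ₑ ∂μ
  set S₄ := fun y => essSup (fun x => ‖f₄ (x, y)‖ₑ) μ
  have htriangle : ∀ z, ‖F z‖ₑ ≤ (‖f₂ z‖ₑ + ‖f₄ z‖ₑ) + (‖f₁ z‖ₑ + ‖f₃ z‖ₑ) := fun z => by
    calc ‖F z‖ₑ ≤ ‖f₁ z‖ₑ + ‖f₂ z‖ₑ + ‖f₃ z‖ₑ + ‖f₄ z‖ₑ := by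
          rw [hsum, Pi.add_apply]
          exact (enorm_add_le _ _).trans (add_le_add (enorm_add₃_le ..) le_rfl)
      _ = (‖f₂ z‖ₑ + ‖f₄ z‖ₑ) + (‖f₁ z‖ₑ + ‖f₃ z‖ₑ) := by ring
  have hinner : ∀ y, (rho μ fun x => ‖F (x, y)‖ₑ) ≤ (S₂ y + I₃ y) + (I₁ y + S₄ y) := fun y => by
    calc (rho μ fun x => ‖F (x, y)‖ₑ)
        ≤ essSup (fun x => ‖f₂ (x, y)‖ₑ + ‖f₄ (x, y)‖ₑ) μ +
            ∫⁻ x, ‖f₁ (x, y)‖ₑ + ‖f₃ (x, y)‖ₑ ∂μ :=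
          rho_le_essSup_add_lintegral (hF.comp measurable_prodMk_right).enorm
            (ae_of_all _ fun x => htriangle (x, y))
      _ ≤ (S₂ y + S₄ y) + (I₁ y + I₃ y) :=
          add_le_add (ENNReal.essSup_add_le _ _)
            (lintegral_add_left (h₁.comp measurable_prodMk_right).enorm _).le
      _ = (S₂ y + I₃ y) + (I₁ y + S₄ y) := by ring
  calc rho ν (fun y => rho μ fun x => ‖F (x, y)‖ₑ)
      ≤ essSup (S₂ + I₃) ν + ∫⁻ y, I₁ y + S₄ y ∂ν :=
        rho_le_essSup_add_lintegral hF.enorm.rho_prod_left (ae_of_all _ hinner)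
    _ ≤ (essSup S₂ ν + essSup I₃ ν) + (∫⁻ y, I₁ y ∂ν + ∫⁻ y, S₄ y ∂ν) :=
        add_le_add (ENNReal.essSup_add_le _ _)
          (lintegral_add_left h₁.enorm.lintegral_prod_left' _).le
    _ ≤ (eLpNorm f₂ ∞ (μ.prod ν) + mixedNorm μ ν 1 ∞ f₃) +
          (eLpNorm f₁ 1 (μ.prod ν) + mixedNorm μ ν ∞ 1 f₄) := by
        rw [mixedNorm_one_top_s18, mixedNorm_top_one_s18, eLpNorm_one_eq_lintegral_enorm,
          lintegral_prod_symm _ h₁.enorm.aemeasurable]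
        gcongr
        exact essSup_essSup_le_eLpNorm_top h₂
    _ = _ := by ring

theorem rho_rho_le_Hnorm {F : X × Y → ℂ} (hF : Measurable F) :
    rho ν (fun y => rho μ fun x => ‖F (x, y)‖ₑ) ≤ Hnorm μ ν F :=
  le_iInf₂ fun _ ⟨h₁, h₂, _, _, hsum⟩ => rho_rho_le_of_eq_add hF h₁ h₂ hsum

end UpperBound

section Splitting

variable {Ω E : Type*} [MeasurableSpace Ω] [NormedAddCommGroup E] [NormedSpace ℝ E]

theorem enorm_toReal_div_norm_smul {x : E} {r : ℝ≥0∞} (hr : r ≤ ‖x‖ₑ) :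
    ‖(r.toReal / ‖x‖) • x‖ₑ = r := by
  rcases eq_or_ne x 0 with rfl | hx
  · simp_all
  rw [← ofReal_norm, norm_smul, Real.norm_of_nonneg (by positivity),
    div_mul_cancel₀ _ (norm_ne_zero_iff.mpr hx),
    ofReal_toReal (ne_top_of_le_ne_top enorm_ne_top hr)]

variable [MeasurableSpace E] [BorelSpace E]

theorem exists_eq_add_of_enorm_eq_add {F : Ω → E} (hF : Measurable F) {p q : Ω → ℝ≥0∞}
    (hp : Measurable p) (hq : Measurable q) (hpq : ∀ z, ‖F z‖ₑ = p z + q z) :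
    ∃ f g : Ω → E, Measurable f ∧ Measurable g ∧ F = f + g ∧
      (∀ z, ‖f z‖ₑ = p z) ∧ ∀ z, ‖g z‖ₑ = q z := by
  refine ⟨fun z => ((p z).toReal / ‖F z‖) • F z, fun z => ((q z).toReal / ‖F z‖) • F z,
    by fun_prop, by fun_prop, funext fun z => ?_,
    fun z => enorm_toReal_div_norm_smul ((le_self_add).trans_eq (hpq z).symm),
    fun z => enorm_toReal_div_norm_smul ((le_add_self).trans_eq (hpq z).symm)⟩
  rcases eq_or_ne (F z) 0 with hz | hz
  · simp [hz]
  obtain ⟨hp_top, hq_top⟩ : p z ≠ ∞ ∧ q z ≠ ∞ := ENNReal.add_ne_top.mp (hpq z ▸ enorm_ne_top)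
  have hsum : (p z).toReal + (q z).toReal = ‖F z‖ := by
    rw [← ENNReal.toReal_add hp_top hq_top, ← hpq, toReal_enorm]
  rw [Pi.add_apply, ← add_smul, ← add_div, hsum, div_self (norm_ne_zero_iff.mpr hz), one_smul]

end Splitting

section LowerBound

variable {X Y : Type*} [MeasurableSpace X] [MeasurableSpace Y] {μ : Measure X} {ν : Measure Y}

theorem Hnorm_le_of_enorm_eq_add {F : X × Y → ℂ} (hF : Measurable F)
    {p₁ p₂ p₃ p₄ : X × Y → ℝ≥0∞} (h₁ : Measurable p₁) (h₂ : Measurable p₂) (h₃ : Measurable p₃)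
    (h₄ : Measurable p₄) (hsum : ∀ z, ‖F z‖ₑ = p₁ z + p₂ z + p₃ z + p₄ z) :
    Hnorm μ ν F ≤ ∫⁻ z, p₁ z ∂μ.prod ν + essSup p₂ (μ.prod ν) +
      essSup (fun y => ∫⁻ x, p₃ (x, y) ∂μ) ν + ∫⁻ y, essSup (fun x => p₄ (x, y)) μ ∂ν := by
  obtain ⟨f₁₂₃, f₄, hf₁₂₃, hf₄, rfl, hn₁₂₃, hn₄⟩ :=
    exists_eq_add_of_enorm_eq_add hF (h₁.add h₂ |>.add h₃) h₄ hsum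
  obtain ⟨f₁₂, f₃, hf₁₂, hf₃, rfl, hn₁₂, hn₃⟩ :=
    exists_eq_add_of_enorm_eq_add hf₁₂₃ (h₁.add h₂) h₃ hn₁₂₃
  obtain ⟨f₁, f₂, hf₁, hf₂, rfl, hn₁, hn₂⟩ :=
    exists_eq_add_of_enorm_eq_add hf₁₂ h₁ h₂ hn₁₂
  refine (iInf₂_le (f₁, f₂, f₃, f₄) ⟨hf₁, hf₂, hf₃, hf₄, rfl⟩).trans_eq ?_
  simp only [eLpNorm_one_eq_lintegral_enorm, eLpNorm_exponent_top, eLpNormEssSup,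
    mixedNorm_one_top_s18, mixedNorm_top_one_s18, hn₁, hn₂, hn₃, hn₄]

theorem ENNReal.le_two_mul_tsub_of_two_mul_lt {a b : ℝ≥0∞} (h : 2 * a < b) : b ≤ 2 * (b - a) := by
  have ha : a ≠ ∞ := by
    rintro rfl
    simp at h
  have hab : a ≤ b - a := ENNReal.le_sub_of_add_le_left ha (by rw [← two_mul]; exact h.le)
  calc b = (b - a) + a := (tsub_add_cancel_of_le (le_self_add.trans (two_mul a ▸ h.le))).symm
    _ ≤ (b - a) + (b - a) := add_le_add le_rfl hab
    _ = 2 * (b - a) := (two_mul _).symm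

variable [SFinite μ] [SFinite ν]

theorem Hnorm_le_of_lintegral_tsub_le {F : X × Y → ℂ} (hF : Measurable F) {G : Y → ℝ≥0∞}
    (hG : Measurable G) {T : ℝ≥0∞} (hT : ∫⁻ y, G y - T ∂ν ≤ T)
    (hGF : ∀ y, ∫⁻ x, ‖F (x, y)‖ₑ - G y ∂μ ≤ G y) :
    Hnorm μ ν F ≤ 6 * T := by
  have hbig : MeasurableSet {z : X × Y | 2 * T < G z.2} :=
    measurableSet_lt measurable_const (hG.comp measurable_snd)
  have hAG : Measurable fun z : X × Y => ‖F z‖ₑ - G z.2 := hF.enorm.sub (hG.comp measurable_snd)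
  have hmin : Measurable fun z : X × Y => min ‖F z‖ₑ (G z.2) :=
    hF.enorm.min (hG.comp measurable_snd)
  have hp₁ : Measurable fun z : X × Y => if 2 * T < G z.2 then ‖F z‖ₑ - G z.2 else 0 :=
    hAG.ite hbig measurable_const
  have hp₂ : Measurable fun z : X × Y => min (min ‖F z‖ₑ (G z.2)) T :=
    hmin.min measurable_const
  have hp₃ : Measurable fun z : X × Y => if 2 * T < G z.2 then 0 else ‖F z‖ₑ - G z.2 :=
    measurable_const.ite hbig hAG
  have hp₄ : Measurable fun z : X × Y => min ‖F z‖ₑ (G z.2) - T := hmin.sub measurable_const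
  refine (Hnorm_le_of_enorm_eq_add hF hp₁ hp₂ hp₃ hp₄ fun z => ?_).trans ?_
  · conv_lhs => rw [← tsub_add_min (a := ‖F z‖ₑ) (b := G z.2),
      ← tsub_add_min (a := min ‖F z‖ₑ (G z.2)) (b := T)]
    split_ifs <;> ring
  have h₁ : ∫⁻ z, (if 2 * T < G z.2 then ‖F z‖ₑ - G z.2 else 0) ∂μ.prod ν ≤ 2 * T := by
    rw [lintegral_prod_symm _ hp₁.aemeasurable]
    calc ∫⁻ y, ∫⁻ x, (if 2 * T < G y then ‖F (x, y)‖ₑ - G y else 0) ∂μ ∂ν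
        ≤ ∫⁻ y, 2 * (G y - T) ∂ν := lintegral_mono fun y => by
          split_ifs with hy
          · exact (hGF y).trans (ENNReal.le_two_mul_tsub_of_two_mul_lt hy)
          · simp
      _ ≤ 2 * T := by rw [lintegral_const_mul' _ _ (by norm_num)]; gcongr
  have h₂ : essSup (fun z => min (min ‖F z‖ₑ (G z.2)) T) (μ.prod ν) ≤ T :=
    essSup_le_of_ae_le T (ae_of_all _ fun z => min_le_right _ _)
  have h₃ : essSup (fun y => ∫⁻ x, (if 2 * T < G y then 0 else ‖F (x, y)‖ₑ - G y) ∂μ) ν ≤ 2 * T :=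
    essSup_le_of_ae_le _ (ae_of_all _ fun y => by
      dsimp only
      split_ifs with hy
      · simp
      · exact (hGF y).trans (not_lt.mp hy))
  have h₄ : ∫⁻ y, essSup (fun x => min ‖F (x, y)‖ₑ (G y) - T) μ ∂ν ≤ T :=
    (lintegral_mono fun y => essSup_le_of_ae_le (G y - T) (ae_of_all _ fun x =>
      tsub_le_tsub_right (min_le_right (‖F (x, y)‖ₑ) (G y)) T)).trans hT
  calc _ ≤ 2 * T + T + 2 * T + T := by gcongr
    _ = 6 * T := by ring

theorem Hnorm_le_six_mul_rho_rho {F : X × Y → ℂ} (hF : Measurable F) :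
    Hnorm μ ν F ≤ 6 * rho ν (fun y => rho μ fun x => ‖F (x, y)‖ₑ) :=
  Hnorm_le_of_lintegral_tsub_le hF hF.enorm.rho_prod_left
    (lintegral_tsub_rho_le hF.enorm.rho_prod_left)
    fun _ => lintegral_tsub_rho_le (hF.comp measurable_prodMk_right).enorm

end LowerBound

/-- The iterated functional `ρ_⊗` is equivalent to the norm of
`𝓗 = L¹ + L^∞ + L^{1,∞} + L^{∞,1}`
(Proposition `prop:IteratedFunctionNormEquivalentToSumNorm`). -/
theorem rho_tensor_equivalent_to_Hnorm
    {X Y : Type*} [MeasurableSpace X] [MeasurableSpace Y]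
    (μ : Measure X) (ν : Measure Y) [SigmaFinite μ] [SigmaFinite ν]
    (F : X × Y → ℂ) (hF : Measurable F) :
    (1 / 16 : ℝ≥0∞) * Hnorm μ ν F ≤
      rho ν (fun y => rho μ fun x => (‖F (x, y)‖₊ : ℝ≥0∞)) ∧
    rho ν (fun y => rho μ fun x => (‖F (x, y)‖₊ : ℝ≥0∞)) ≤ Hnorm μ ν F := by
  refine ⟨?_, rho_rho_le_Hnorm hF⟩
  calc (1 / 16 : ℝ≥0∞) * Hnorm μ ν F
      ≤ 1 / 16 * (6 * rho ν (fun y => rho μ fun x => ‖F (x, y)‖ₑ)) :=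
        mul_le_mul_right (Hnorm_le_six_mul_rho_rho hF) _
    _ ≤ rho ν (fun y => rho μ fun x => ‖F (x, y)‖ₑ) := by
        rw [← mul_assoc]
        refine mul_le_of_le_one_left' ?_
        rw [one_div, ENNReal.inv_mul_le_iff (by norm_num) (by norm_num), mul_one]
        norm_num

end
end
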